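/- arXiv:1704.08398 — 10 statements merged into one kernel-verified Lean document; each statement's English description precedes it below -/
import Mathlib

section
/- For every integer m ≥ 1, the m-th moment of the Erlang-C diffusion approximation satisfies lim_{ζ → 0⁻} |ζ|^m · ∫_ℝ x^m ν_ζ(x) dx = m!, where ν_ζ is the Erlang-C diffusion density with parameter ζ < 0. -/
/-!
Write `ε = -ζ > 0`. Both formulas for `ν_ζ` hold at the junction `x = ε`, which forces
`a₋ = a₊ e^{-ε²/2}`, and the substitution `u = εx` turns the exponential tail of the `n`-th
moment into `ε^{-(n+1)} Γ(n+1, ε²)`. Hence `ε^{n+1} ∫ xⁿ ν = a₊ Nₙ(ε)` with `Nₙ` continuous and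
`Nₙ(0) = Γ(n+1) = n!`. The case `n = 0` together with `∫ ν = 1` eliminates `a₊`, so
`εᵐ ∫ xᵐ ν = Nₘ(ε) / N₀(ε) → m! / 0! = m!`.
-/

open MeasureTheory Set Filter Topology Real

lemma integrable_pow_mul_exp_neg_sq_div_two (n : ℕ) :
    Integrable fun x : ℝ => x ^ n * exp (-(x ^ 2) / 2) := by
  have h := integrable_rpow_mul_exp_neg_mul_sq (b := 1 / 2) (by norm_num) (s := n)
    (by linarith [n.cast_nonneg (α := ℝ)])
  refine h.congr (ae_of_all _ fun x => ?_)
  simp only [rpow_natCast]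
  ring_nf

lemma integrableOn_pow_mul_exp_neg_mul (n : ℕ) {ε c : ℝ} (hε : 0 < ε) (hc : 0 ≤ c) :
    IntegrableOn (fun x : ℝ => x ^ n * exp (-(ε * x))) (Ioi c) := by
  have h := integrableOn_rpow_mul_exp_neg_mul_rpow (s := n) (p := 1)
    (by linarith [n.cast_nonneg (α := ℝ)]) one_pos hε
  refine (h.mono_set (Ioi_subset_Ioi hc)).congr_fun (fun x _ => ?_) measurableSet_Ioi
  simp only [rpow_natCast, rpow_one, neg_mul]

lemma pow_succ_mul_setIntegral_Ioi_pow_mul_exp_neg_mul (n : ℕ) {ε : ℝ} (hε : 0 < ε) (c : ℝ) :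
    ε ^ (n + 1) * ∫ x in Ioi c, x ^ n * exp (-(ε * x)) =
      ∫ u in Ioi (ε * c), u ^ n * exp (-u) := by
  have h := integral_comp_mul_left_Ioi (fun u : ℝ => u ^ n * exp (-u)) c hε
  rw [pow_succ', mul_assoc, ← integral_const_mul]
  simp_rw [← mul_assoc, ← mul_pow]
  rw [h, smul_eq_mul, mul_inv_cancel_left₀ hε.ne']

lemma continuous_setIntegral_Iic {g : ℝ → ℝ} (hg : Continuous g) (hint : Integrable g) :
    Continuous fun t => ∫ x in Iic t, g x := by
  have h : (fun t => ∫ x in Iic t, g x) = fun t => (∫ x in Iic 0, g x) + ∫ x in 0..t, g x := by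
    ext t
    rw [← intervalIntegral.integral_Iic_sub_Iic hint.integrableOn hint.integrableOn]
    ring
  rw [h]
  exact continuous_const.add
    (intervalIntegral.continuous_primitive (fun _ _ => hg.intervalIntegrable _ _) 0)

lemma continuousOn_setIntegral_Ioi {g : ℝ → ℝ} {c : ℝ} (hg : Continuous g)
    (hint : IntegrableOn g (Ioi c)) :
    ContinuousOn (fun a => ∫ x in Ioi a, g x) (Ici c) := by
  refine ((continuous_const (y := ∫ x in Ioi c, g x)).sub (intervalIntegral.continuous_primitive
    (fun _ _ => hg.intervalIntegrable (μ := volume) _ _) c)).continuousOn.congr fun a ha => ?_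
  simp only [Pi.sub_apply, ← intervalIntegral.integral_Ioi_sub_Ioi hint ha, sub_sub_cancel]

namespace ErlangC

/-- `Nₙ(ε)`; the second integral is the upper incomplete Gamma function `Γ(n+1, ε²)`. -/
noncomputable def unnormalizedMoment (n : ℕ) (ε : ℝ) : ℝ :=
  ε ^ (n + 1) * exp (-(ε ^ 2) / 2) * (∫ x in Iic ε, x ^ n * exp (-(x ^ 2) / 2)) +
    ∫ u in Ioi (ε ^ 2), u ^ n * exp (-u)

lemma continuous_unnormalizedMoment (n : ℕ) : Continuous (unnormalizedMoment n) := by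
  have hgauss := continuous_setIntegral_Iic (by fun_prop) (integrable_pow_mul_exp_neg_sq_div_two n)
  have hgamma : ContinuousOn (fun a => ∫ u in Ioi a, u ^ n * exp (-u)) (Ici 0) :=
    continuousOn_setIntegral_Ioi (by fun_prop)
      (by simpa using integrableOn_pow_mul_exp_neg_mul n one_pos le_rfl)
  exact ((by fun_prop : Continuous fun ε : ℝ => ε ^ (n + 1) * exp (-(ε ^ 2) / 2)).mul hgauss).add
    (hgamma.comp_continuous (continuous_pow 2) sq_nonneg)

lemma unnormalizedMoment_at_zero (n : ℕ) : unnormalizedMoment n 0 = n.factorial := by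
  rw [← Real.Gamma_nat_eq_factorial, Real.Gamma_eq_integral (by positivity)]
  simp [unnormalizedMoment, mul_comm]

lemma pow_succ_mul_moment_eq {f : ℝ → ℝ} {ε a b : ℝ} (hε : 0 < ε)
    (hleft : ∀ x ≤ ε, f x = a * exp (-(x ^ 2) / 2))
    (hright : ∀ x, ε ≤ x → f x = b * exp (-(ε * x))) (n : ℕ) :
    ε ^ (n + 1) * ∫ x, x ^ n * f x = b * unnormalizedMoment n ε := by
  have hab : a = b * exp (-(ε ^ 2) / 2) := by
    have h := (hleft ε le_rfl).symm.trans (hright ε le_rfl)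
    have hsplit : exp (-(ε * ε)) = exp (-(ε ^ 2) / 2) * exp (-(ε ^ 2) / 2) := by
      rw [← exp_add]; ring_nf
    rw [hsplit, ← mul_assoc] at h
    exact mul_right_cancel₀ (exp_pos _).ne' h
  have hIic : ∫ x in Iic ε, x ^ n * f x = a * ∫ x in Iic ε, x ^ n * exp (-(x ^ 2) / 2) := by
    rw [← integral_const_mul]
    refine setIntegral_congr_fun measurableSet_Iic fun x hx => ?_
    rw [hleft x hx]; ring
  have hIoi : ∫ x in Ioi ε, x ^ n * f x = b * ∫ x in Ioi ε, x ^ n * exp (-(ε * x)) := by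
    rw [← integral_const_mul]
    refine setIntegral_congr_fun measurableSet_Ioi fun x hx => ?_
    rw [hright x (le_of_lt hx)]; ring
  have hintIic : IntegrableOn (fun x => x ^ n * f x) (Iic ε) :=
    (((integrable_pow_mul_exp_neg_sq_div_two n).const_mul a).integrableOn).congr_fun
      (fun x hx => by simp only [hleft x hx]; ring) measurableSet_Iic
  have hintIoi : IntegrableOn (fun x => x ^ n * f x) (Ioi ε) :=
    IntegrableOn.congr_fun ((integrableOn_pow_mul_exp_neg_mul n hε hε.le).const_mul b)
      (fun x hx => by simp only [hright x (le_of_lt hx)]; ring) measurableSet_Ioi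
  have hgamma := pow_succ_mul_setIntegral_Ioi_pow_mul_exp_neg_mul n hε ε
  rw [← sq] at hgamma
  rw [← intervalIntegral.integral_Iic_add_Ioi hintIic hintIoi, hIic, hIoi, unnormalizedMoment,
    ← hgamma, hab]
  ring

lemma pow_mul_moment_eq_div {f : ℝ → ℝ} {ε a b : ℝ} (hε : 0 < ε)
    (hleft : ∀ x ≤ ε, f x = a * exp (-(x ^ 2) / 2))
    (hright : ∀ x, ε ≤ x → f x = b * exp (-(ε * x))) (hmass : ∫ x, f x = 1) (n : ℕ) :
    ε ^ n * ∫ x, x ^ n * f x = unnormalizedMoment n ε / unnormalizedMoment 0 ε := by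
  have hzeroth := pow_succ_mul_moment_eq hε hleft hright 0
  simp only [zero_add, pow_one, pow_zero, one_mul, hmass, mul_one] at hzeroth
  have hb : b ≠ 0 := by
    rintro rfl; rw [zero_mul] at hzeroth; exact hε.ne' hzeroth
  have h0 : unnormalizedMoment 0 ε ≠ 0 := by
    rintro h; rw [h, mul_zero] at hzeroth; exact hε.ne' hzeroth
  rw [eq_div_iff h0]
  refine mul_left_cancel₀ hb ?_
  linear_combination pow_succ_mul_moment_eq hε hleft hright n - (ε ^ n * ∫ x, x ^ n * f x) * hzeroth

end ErlangC

theorem erlangC_density_moment_limit_general (m : ℕ)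
    (nu : ℝ → ℝ → ℝ) (aminus aplus : ℝ → ℝ)
    (hprop : ∀ ζ : ℝ, ζ < 0 →
      0 < aminus ζ ∧ 0 < aplus ζ ∧
      Continuous (nu ζ) ∧
      (∀ x : ℝ, x ≤ -ζ → nu ζ x = aminus ζ * Real.exp (-(x ^ 2) / 2)) ∧
      (∀ x : ℝ, -ζ ≤ x → nu ζ x = aplus ζ * Real.exp (-(|ζ| * x))) ∧
      (∫ x : ℝ, nu ζ x) = 1) :
    Filter.Tendsto (fun ζ : ℝ => |ζ| ^ m * ∫ x : ℝ, x ^ m * nu ζ x)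
      (nhdsWithin (0 : ℝ) (Set.Iio 0)) (nhds ((Nat.factorial m : ℕ) : ℝ)) := by
  have hratio : Tendsto
      (fun ζ : ℝ => ErlangC.unnormalizedMoment m (-ζ) / ErlangC.unnormalizedMoment 0 (-ζ))
      (𝓝 0) (𝓝 (m.factorial : ℝ)) := by
    have h := ((ErlangC.continuous_unnormalizedMoment m).tendsto 0).div
      ((ErlangC.continuous_unnormalizedMoment 0).tendsto 0)
      (by simp [ErlangC.unnormalizedMoment_at_zero])
    simp only [ErlangC.unnormalizedMoment_at_zero, Nat.factorial_zero, Nat.cast_one, div_one] at h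
    exact h.comp (continuous_neg.tendsto' 0 0 neg_zero)
  refine (hratio.mono_left nhdsWithin_le_nhds).congr' ?_
  filter_upwards [self_mem_nhdsWithin] with ζ hζ
  obtain ⟨-, -, -, hleft, hright, hmass⟩ := hprop ζ hζ
  rw [abs_of_neg hζ] at hright ⊢
  exact (ErlangC.pow_mul_moment_eq_div (neg_pos.2 hζ) hleft hright hmass m).symm

/-- As `ζ → 0⁻`, the `m`-th moment of the Erlang-C diffusion density `ν_ζ`
scaled by `|ζ|^m` converges to `m!`. -/
theorem erlangC_density_moment_limit (m : ℕ) (hm : 1 ≤ m)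
    (nu : ℝ → ℝ → ℝ) (aminus aplus : ℝ → ℝ)
    (hprop : ∀ ζ : ℝ, ζ < 0 →
      0 < aminus ζ ∧ 0 < aplus ζ ∧
      Continuous (nu ζ) ∧
      (∀ x : ℝ, x ≤ -ζ → nu ζ x = aminus ζ * Real.exp (-(x ^ 2) / 2)) ∧
      (∀ x : ℝ, -ζ ≤ x → nu ζ x = aplus ζ * Real.exp (-(|ζ| * x))) ∧
      (∫ x : ℝ, nu ζ x) = 1) :
    Filter.Tendsto (fun ζ : ℝ => |ζ| ^ m * ∫ x : ℝ, x ^ m * nu ζ x)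
      (nhdsWithin (0 : ℝ) (Set.Iio 0)) (nhds ((Nat.factorial m : ℕ) : ℝ)) :=
  erlangC_density_moment_limit_general m nu aminus aplus hprop
end

section
/- For every ζ < 0, the Erlang-C diffusion density with parameter ζ is uniformly bounded: ν_ζ(x) ≤ √(2/π) for all x ∈ ℝ. -/
open MeasureTheory Set

/-- The Erlang-C diffusion density `ν_ζ` (for any `ζ < 0`) is bounded by `√(2/π)`. -/
theorem erlangC_density_bound (ζ : ℝ) (hζ : ζ < 0)
    (aminus aplus : ℝ) (haminus : 0 < aminus) (haplus : 0 < aplus)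
    (nu : ℝ → ℝ)
    (hcont : Continuous nu)
    (hleft : ∀ x : ℝ, x ≤ -ζ → nu x = aminus * Real.exp (-(x ^ 2) / 2))
    (hright : ∀ x : ℝ, -ζ ≤ x → nu x = aplus * Real.exp (-(|ζ| * x)))
    (hnorm : (∫ x : ℝ, nu x) = 1) :
    ∀ x : ℝ, nu x ≤ Real.sqrt (2 / Real.pi) := by
  have hmz : (0:ℝ) < -ζ := by linarith
  have habs : |ζ| = -ζ := abs_of_neg hζ
  -- nu is integrable (else its integral would be 0, not 1)
  have hint : Integrable nu := by
    by_contra h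
    rw [integral_undef h] at hnorm
    exact one_ne_zero hnorm.symm
  -- nu is nonnegative
  have hnn : ∀ y, 0 ≤ nu y := by
    intro y
    rcases le_total y (-ζ) with h | h
    · rw [hleft y h]; positivity
    · rw [hright y h]; positivity
  -- the integral over Iic 0 is at most 1
  have h1 : ∫ y in Iic (0:ℝ), nu y ≤ 1 := by
    rw [← hnorm]
    exact setIntegral_le_integral hint (Filter.Eventually.of_forall hnn)
  -- compute the integral over Iic 0
  have h2 : ∫ y in Iic (0:ℝ), nu y = aminus * (Real.sqrt (2 * Real.pi) / 2) := by
    have heq : ∀ y ∈ Iic (0:ℝ), nu y = aminus * Real.exp (-(1/2) * y ^ 2) := by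
      intro y hy
      rw [hleft y (le_trans hy hmz.le)]
      ring_nf
    rw [setIntegral_congr_fun measurableSet_Iic heq, integral_const_mul]
    have hsym : (∫ y in Iic (0:ℝ), Real.exp (-(1/2) * y ^ 2))
        = ∫ y in Ioi (-(0:ℝ)), Real.exp (-(1/2) * y ^ 2) := by
      rw [← integral_comp_neg_Iic]
      simp [neg_sq]
    rw [hsym, neg_zero, integral_gaussian_Ioi]
    have : Real.pi / (1/2) = 2 * Real.pi := by ring
    rw [this]
  -- hence aminus ≤ √(2/π)
  have hs : (0:ℝ) < Real.sqrt (2 * Real.pi) := by positivity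
  have hmul : Real.sqrt (2 / Real.pi) * Real.sqrt (2 * Real.pi) = 2 := by
    rw [← Real.sqrt_mul (by positivity)]
    have : 2 / Real.pi * (2 * Real.pi) = 4 := by
      field_simp; ring
    rw [this]
    rw [show (4:ℝ) = 2 ^ 2 by norm_num, Real.sqrt_sq (by norm_num)]
  have hbound : aminus ≤ Real.sqrt (2 / Real.pi) := by
    rw [h2] at h1
    nlinarith [hs, hmul]
  -- finally, nu x ≤ aminus everywhere
  intro x
  refine le_trans ?_ hbound
  rcases le_total x (-ζ) with h | h
  · rw [hleft x h]
    have : Real.exp (-(x ^ 2) / 2) ≤ 1 := by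
      rw [Real.exp_le_one_iff]
      nlinarith [sq_nonneg x]
    nlinarith [haminus]
  · rw [hright x h]
    have hx : Real.exp (-(|ζ| * x)) ≤ Real.exp (-(|ζ| * -ζ)) := by
      apply Real.exp_le_exp.mpr
      have : |ζ| * -ζ ≤ |ζ| * x := by
        apply mul_le_mul_of_nonneg_left h (abs_nonneg ζ)
      linarith
    have hmatch : aplus * Real.exp (-(|ζ| * -ζ)) = aminus * Real.exp (-((-ζ) ^ 2) / 2) := by
      rw [← hright (-ζ) le_rfl, ← hleft (-ζ) le_rfl]
    have hle1 : Real.exp (-((-ζ) ^ 2) / 2) ≤ 1 := by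
      rw [Real.exp_le_one_iff]
      nlinarith [sq_nonneg ζ]
    calc aplus * Real.exp (-(|ζ| * x)) ≤ aplus * Real.exp (-(|ζ| * -ζ)) := by
          exact mul_le_mul_of_nonneg_left hx haplus.le
      _ = aminus * Real.exp (-((-ζ) ^ 2) / 2) := hmatch
      _ ≤ aminus := by nlinarith [haminus]
end

section
/- For all λ > 0, μ > 0 and every integer n ≥ 1 with 1 ≤ R < n (where R = λ/μ), the state-dependent diffusion density is uniformly bounded: ν_S(x) ≤ 4 for all x ∈ ℝ. -/
open MeasureTheory Set

set_option maxHeartbeats 1000000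

/-- The state-dependent diffusion density `ν_S` of the Erlang-C model is
bounded by `4`, for all parameters with `1 ≤ R < n`. -/
theorem erlangC_state_dependent_density_bound
    (lam mu : ℝ) (n : ℕ)
    (hlam : 0 < lam) (hmu : 0 < mu) (hn : 1 ≤ n)
    (R δ ζ : ℝ)
    (hR : R = lam / mu) (hR1 : 1 ≤ R) (hRn : R < (n : ℝ))
    (hδ : δ = 1 / Real.sqrt R) (hζ : ζ = δ * (R - (n : ℝ)))
    (b : ℝ → ℝ)
    (hb : ∀ x : ℝ, b x = if x ≤ -ζ then -(mu * x) else mu * ζ)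
    (a : ℝ → ℝ)
    (ha : ∀ x : ℝ, a x = if x ≤ -(1 / δ) then mu
                         else if x ≤ -ζ then mu * (2 + δ * x)
                         else mu * (2 + δ * |ζ|))
    (kappa : ℝ) (hkappa : 0 < kappa)
    (nuS : ℝ → ℝ)
    (hnuS : ∀ x : ℝ, nuS x = (kappa / a x) * Real.exp (∫ y in (0:ℝ)..x, 2 * b y / a y))
    (hnorm : (∫ x : ℝ, nuS x) = 1) :
    ∀ x : ℝ, nuS x ≤ 4 := by
  -- Basic positivity facts
  have hRpos : (0:ℝ) < R := lt_of_lt_of_le one_pos hR1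
  have hsR : 1 ≤ Real.sqrt R := Real.one_le_sqrt.mpr hR1
  have hsRpos : (0:ℝ) < Real.sqrt R := lt_of_lt_of_le one_pos hsR
  have hδpos : 0 < δ := by rw [hδ]; positivity
  have hδ1 : δ ≤ 1 := by rw [hδ, div_le_one hsRpos]; exact hsR
  have hδδ : δ * (1 / δ) = 1 := by field_simp
  have hinvδ : 1 ≤ 1 / δ := by rw [le_div_iff₀ hδpos]; linarith
  have hζneg : ζ < 0 := by
    rw [hζ]
    exact mul_neg_of_pos_of_neg hδpos (by linarith)
  have habs : |ζ| = -ζ := abs_of_neg hζneg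
  -- lower bound for a
  have ha_ge : ∀ x, mu ≤ a x := by
    intro x
    rw [ha x]
    split_ifs with h1 h2
    · exact le_refl mu
    · have hx : -(1/δ) < x := not_le.mp h1
      have h2' : -1 < δ * x := by nlinarith [mul_pos hδpos (by linarith : (0:ℝ) < x + 1/δ)]
      nlinarith
    · nlinarith [mul_nonneg hδpos.le (abs_nonneg ζ)]
  have ha_pos : ∀ x, 0 < a x := fun x => lt_of_lt_of_le hmu (ha_ge x)
  -- continuity of a and b
  have hbf : b = fun x => if x ≤ -ζ then -(mu * x) else mu * ζ := funext hb
  have haf : a = fun x => if x ≤ -(1 / δ) then mu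
                         else if x ≤ -ζ then mu * (2 + δ * x)
                         else mu * (2 + δ * |ζ|) := funext ha
  have hbc : Continuous b := by
    rw [hbf]
    exact Continuous.if_le (by fun_prop) (by fun_prop) continuous_id continuous_const
      (fun x hx => by subst hx; ring)
  have hac : Continuous a := by
    rw [haf]
    apply Continuous.if_le continuous_const ?_ continuous_id continuous_const ?_
    · exact Continuous.if_le (by fun_prop) (by fun_prop) continuous_id continuous_const
        (fun x hx => by subst hx; rw [habs])
    · intro x hx
      subst hx
      rw [if_pos (by linarith : -(1/δ) ≤ -ζ)]
      have h9 : δ * -(1/δ) = -1 := by rw [mul_neg, hδδ]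
      rw [h9]; ring
  have hhc : Continuous (fun y => 2 * b y / a y) :=
    (continuous_const.mul hbc).div hac (fun y => (ha_pos y).ne')
  have hhi : ∀ u v : ℝ, IntervalIntegrable (fun y => 2 * b y / a y) volume u v :=
    fun u v => hhc.intervalIntegrable u v
  -- exponent is nonpositive
  have hf_nonpos : ∀ x : ℝ, (∫ y in (0:ℝ)..x, 2 * b y / a y) ≤ 0 := by
    intro x
    rcases le_total 0 x with hx | hx
    · have h0 : (∫ y in (0:ℝ)..x, 2 * b y / a y) ≤ ∫ y in (0:ℝ)..x, (0:ℝ) := by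
        apply intervalIntegral.integral_mono_on hx (hhi 0 x) intervalIntegrable_const
        intro u hu
        apply div_nonpos_of_nonpos_of_nonneg _ (ha_pos u).le
        rw [hb u]
        split_ifs with h <;> nlinarith [hu.1]
      simpa using h0
    · rw [intervalIntegral.integral_symm]
      simp only [neg_nonpos]
      apply intervalIntegral.integral_nonneg hx
      intro u hu
      apply div_nonneg _ (ha_pos u).le
      rw [hb u, if_pos (by linarith [hu.2] : u ≤ -ζ)]
      nlinarith [hu.2]
  -- uniform upper bound by kappa / mu
  have hub : ∀ x, nuS x ≤ kappa / mu := by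
    intro x
    rw [hnuS x]
    have h1 : kappa / a x ≤ kappa / mu :=
      div_le_div_of_nonneg_left hkappa.le hmu (ha_ge x)
    have h2 : Real.exp (∫ y in (0:ℝ)..x, 2 * b y / a y) ≤ 1 :=
      Real.exp_le_one_iff.mpr (hf_nonpos x)
    calc kappa / a x * Real.exp (∫ y in (0:ℝ)..x, 2 * b y / a y)
        ≤ kappa / mu * 1 :=
          mul_le_mul h1 h2 (Real.exp_pos _).le (by positivity)
      _ = kappa / mu := mul_one _
  -- nonnegativity of nuS
  have hpos : ∀ x, 0 ≤ nuS x := by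
    intro x
    rw [hnuS x]
    exact mul_nonneg (div_nonneg hkappa.le (ha_pos x).le) (Real.exp_pos _).le
  -- lower bound on Ioc (-1) 0
  have hlow : ∀ x ∈ Ioc (-1:ℝ) 0, kappa / (2*mu) * (1 - x^2) ≤ nuS x := by
    intro x hx
    obtain ⟨hx1, hx0⟩ := hx
    have hax : a x ≤ 2 * mu := by
      rw [ha x]
      split_ifs with h1 h2
      · linarith
      · nlinarith [mul_nonneg hδpos.le (by linarith : (0:ℝ) ≤ -x)]
      · exfalso; exact h2 (by linarith)
    have hle : (∫ y in x..(0:ℝ), 2 * b y / a y) ≤ ∫ y in x..(0:ℝ), (-2)*y := by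
      apply intervalIntegral.integral_mono_on hx0 (hhi x 0)
        (Continuous.intervalIntegrable (by fun_prop) x 0)
      intro u hu
      obtain ⟨hux, hu0⟩ := hu
      have hu1 : -1 < u := lt_of_lt_of_le hx1 hux
      rw [hb u, ha u, if_pos (by linarith : u ≤ -ζ),
        if_neg (by intro h; linarith : ¬ u ≤ -(1/δ)), if_pos (by linarith : u ≤ -ζ)]
      have hden : 1 ≤ 2 + δ * u := by
        nlinarith [mul_pos hδpos (by linarith : (0:ℝ) < u + 1)]
      have hdpos : 0 < mu * (2 + δ * u) := by nlinarith
      rw [div_le_iff₀ hdpos]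
      nlinarith [mul_nonneg (mul_nonneg (by linarith : (0:ℝ) ≤ -2*u) hmu.le)
        (by linarith : (0:ℝ) ≤ 1 + δ*u)]
    have hval : (∫ y in x..(0:ℝ), (-2)*y) = x^2 := by
      rw [intervalIntegral.integral_const_mul, integral_id]
      ring
    have hexp : -x^2 ≤ ∫ y in (0:ℝ)..x, 2 * b y / a y := by
      rw [intervalIntegral.integral_symm]
      rw [hval] at hle
      linarith
    have hx2 : x^2 ≤ 1 := by nlinarith
    rw [hnuS x]
    have h1 : kappa / (2*mu) ≤ kappa / a x :=
      div_le_div_of_nonneg_left hkappa.le (ha_pos x) hax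
    have h2 : 1 - x^2 ≤ Real.exp (∫ y in (0:ℝ)..x, 2 * b y / a y) := by
      have := Real.add_one_le_exp (-x^2)
      have hmono := Real.exp_le_exp.mpr hexp
      linarith
    exact mul_le_mul h1 h2 (by linarith) (div_nonneg hkappa.le (ha_pos x).le)
  -- integrability of nuS
  have hint : Integrable nuS := by
    by_contra hcon
    rw [integral_undef hcon] at hnorm
    norm_num at hnorm
  -- the normalization forces kappa ≤ 3 mu
  have hIval : (∫ x in Ioc (-1:ℝ) 0, kappa/(2*mu) * (1 - x^2)) = kappa/(3*mu) := by
    rw [← intervalIntegral.integral_of_le (by norm_num : (-1:ℝ) ≤ 0),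
      intervalIntegral.integral_const_mul,
      intervalIntegral.integral_sub intervalIntegrable_const
        (Continuous.intervalIntegrable (by fun_prop) _ _)]
    rw [integral_pow]
    simp
    field_simp
    ring
  have hmono1 : (∫ x in Ioc (-1:ℝ) 0, kappa/(2*mu) * (1 - x^2)) ≤ ∫ x in Ioc (-1:ℝ) 0, nuS x := by
    apply setIntegral_mono_on _ hint.integrableOn measurableSet_Ioc hlow
    exact (Continuous.integrableOn_Ioc (by fun_prop))
  have hmono2 : (∫ x in Ioc (-1:ℝ) 0, nuS x) ≤ 1 := by
    rw [← hnorm]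
    exact setIntegral_le_integral hint (Filter.Eventually.of_forall hpos)
  have hk3 : kappa ≤ 3 * mu := by
    have hh : kappa / (3*mu) ≤ 1 := by rw [← hIval]; linarith
    rw [div_le_one (by positivity)] at hh
    linarith
  -- conclude
  intro x
  have h1 := hub x
  have h2 : kappa / mu ≤ 3 := by rw [div_le_iff₀ hmu]; linarith
  linarith
end

section
/- Let U and V be real random variables and suppose V has a density bounded above by a constant C > 0. If d_{W₂}(U, V) < 4C, then d_K(U, V) ≤ 5·(C/2)^{2/3}·d_{W₂}(U, V)^{1/3}. -/
/-!
Test the `W₂` bound against `x ↦ smoothStep ε (x - a)`: its derivative is minus a trapezoid of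
height at most `1` and slopes `±1` supported on `[a, a + ε]`, so it lies in `W₂`; it is constant,
equal to `D(ε) := smoothStep ε 0`, on `(-∞, a]` and vanishes on `[a + ε, ∞)`. Sandwiching it
between `D(ε)` times the indicators of `(-∞, a]` and `(-∞, a + ε]`, and paying `Cε` for the
mass of `V` on an interval of length `ε`, gives `|F_U(a) - F_V(a)| ≤ Cε + d / D(ε)`, with
`D(ε) = ε² / 4` for `ε ≤ 2` and `D(ε) = ε - 1` for `ε ≥ 2`. Take `ε = 2 (d / C)^(1/3)` when
`d ≤ C` and `ε = 1 + √(d / C)` when `C < d < 4C`.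
-/

open MeasureTheory Set intervalIntegral

noncomputable section

def trapezoid (ε t : ℝ) : ℝ := max 0 (min 1 (min t (ε - t)))

def smoothStep (ε y : ℝ) : ℝ := ∫ t in y..ε, trapezoid ε t

namespace trapezoid

variable (ε : ℝ)

lemma nonneg (t : ℝ) : 0 ≤ trapezoid ε t := le_max_left _ _

lemma le_one (t : ℝ) : trapezoid ε t ≤ 1 := max_le zero_le_one (min_le_left _ _)

lemma lipschitzWith : LipschitzWith 1 (trapezoid ε) := by
  have h := (LipschitzWith.const (0 : ℝ)).max ((LipschitzWith.const (1 : ℝ)).min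
    ((LipschitzWith.id).min (IsometryEquiv.subLeft ε).isometry.lipschitz))
  convert h using 1
  · norm_num
  · rfl

lemma continuous : Continuous (trapezoid ε) := (lipschitzWith ε).continuous

lemma symm (t : ℝ) : trapezoid ε (ε - t) = trapezoid ε t := by
  simp only [trapezoid, sub_sub_cancel, min_comm]

lemma eq_zero_of_nonpos {t : ℝ} (ht : t ≤ 0) : trapezoid ε t = 0 :=
  max_eq_left ((min_le_right _ _).trans ((min_le_left _ _).trans ht))

lemma eq_zero_of_le {t : ℝ} (ht : ε ≤ t) : trapezoid ε t = 0 :=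
  max_eq_left ((min_le_right _ _).trans ((min_le_right _ _).trans (by linarith)))

lemma eq_min_of_le_half {t : ℝ} (ht₀ : 0 ≤ t) (ht : t ≤ ε / 2) :
    trapezoid ε t = min 1 t := by
  rw [trapezoid, min_eq_left (show t ≤ ε - t by linarith), max_eq_right (le_min zero_le_one ht₀)]

end trapezoid

namespace smoothStep

variable (ε : ℝ)

lemma hasDerivAt (y : ℝ) : HasDerivAt (smoothStep ε) (-trapezoid ε y) y :=
  integral_hasDerivAt_left ((trapezoid.continuous ε).intervalIntegrable y ε)
    ((trapezoid.continuous ε).stronglyMeasurableAtFilter _ _) (trapezoid.continuous ε).continuousAt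

lemma differentiable : Differentiable ℝ (smoothStep ε) :=
  fun y => (hasDerivAt ε y).differentiableAt

lemma deriv_eq : deriv (smoothStep ε) = fun y => -trapezoid ε y :=
  funext fun y => (hasDerivAt ε y).deriv

lemma lipschitzWith : LipschitzWith 1 (smoothStep ε) := by
  refine lipschitzWith_of_nnnorm_deriv_le (differentiable ε) fun y => ?_
  rw [deriv_eq, ← NNReal.coe_le_coe, coe_nnnorm, norm_neg,
    Real.norm_of_nonneg (trapezoid.nonneg ε y)]
  exact trapezoid.le_one ε y

lemma lipschitzWith_deriv : LipschitzWith 1 (deriv (smoothStep ε)) := by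
  rw [deriv_eq]
  exact (trapezoid.lipschitzWith ε).neg

lemma sub_eq (x y : ℝ) : smoothStep ε x - smoothStep ε y = ∫ t in x..y, trapezoid ε t := by
  rw [smoothStep, smoothStep, sub_eq_iff_eq_add, integral_add_adjacent_intervals
    ((trapezoid.continuous ε).intervalIntegrable _ _)
    ((trapezoid.continuous ε).intervalIntegrable _ _)]

lemma antitone : Antitone (smoothStep ε) := fun x y hxy => by
  have h := sub_eq ε x y
  have := integral_nonneg (μ := volume) hxy fun t _ => trapezoid.nonneg ε t
  linarith

lemma eq_zero_of_le {y : ℝ} (hy : ε ≤ y) : smoothStep ε y = 0 := by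
  rw [smoothStep, integral_symm, integral_congr fun t ht => trapezoid.eq_zero_of_le ε
    (uIcc_of_le hy ▸ ht).1]
  simp

lemma eq_of_nonpos {y : ℝ} (hy : y ≤ 0) : smoothStep ε y = smoothStep ε 0 := by
  rw [← sub_eq_zero, sub_eq, integral_congr fun t ht => trapezoid.eq_zero_of_nonpos ε
    (uIcc_of_le hy ▸ ht).2]
  simp

lemma nonneg (y : ℝ) : 0 ≤ smoothStep ε y := by
  rcases le_total ε y with h | h
  · rw [eq_zero_of_le ε h]
  · exact (eq_zero_of_le ε le_rfl).symm.le.trans (antitone ε h)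

lemma le_apply_zero (y : ℝ) : smoothStep ε y ≤ smoothStep ε 0 := by
  rcases le_total y 0 with h | h
  · rw [eq_of_nonpos ε h]
  · exact antitone ε h

lemma apply_zero_eq_two_mul_integral (hε : 0 ≤ ε) :
    smoothStep ε 0 = 2 * ∫ t in 0..ε / 2, min 1 t := by
  have hI := (trapezoid.continuous ε).intervalIntegrable (μ := volume)
  have hhalf : ∫ t in 0..ε / 2, trapezoid ε t = ∫ t in 0..ε / 2, min 1 t :=
    integral_congr fun t ht => by
      rw [uIcc_of_le (by linarith : (0 : ℝ) ≤ ε / 2)] at ht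
      exact trapezoid.eq_min_of_le_half ε ht.1 ht.2
  have hflip : ∫ t in ε / 2..ε, trapezoid ε t = ∫ t in 0..ε / 2, trapezoid ε t := by
    simpa only [trapezoid.symm, sub_self, sub_half] using
      integral_comp_sub_left (trapezoid ε) ε (a := ε / 2) (b := ε)
  rw [smoothStep, ← integral_add_adjacent_intervals (hI 0 (ε / 2)) (hI (ε / 2) ε), hflip, hhalf]
  ring

lemma apply_zero_of_le_two (hε : 0 ≤ ε) (hε₂ : ε ≤ 2) : smoothStep ε 0 = ε ^ 2 / 4 := by
  have : ∫ t in 0..ε / 2, min 1 t = ∫ t in 0..ε / 2, t :=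
    integral_congr fun t ht =>
      min_eq_right ((uIcc_of_le (by linarith : (0 : ℝ) ≤ ε / 2) ▸ ht).2.trans (by linarith))
  rw [apply_zero_eq_two_mul_integral ε hε, this, integral_id]
  ring

lemma apply_zero_of_two_le (hε : 2 ≤ ε) : smoothStep ε 0 = ε - 1 := by
  have hI : ∀ a b : ℝ, IntervalIntegrable (fun t : ℝ => min 1 t) volume a b :=
    (continuous_const.min continuous_id).intervalIntegrable
  have h₁ : ∫ t in 0..1, min 1 t = ∫ t in (0 : ℝ)..1, t :=
    integral_congr fun t ht => min_eq_right (uIcc_of_le (zero_le_one' ℝ) ▸ ht).2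
  have h₂ : ∫ t in 1..ε / 2, min 1 t = ∫ t in (1 : ℝ)..ε / 2, 1 :=
    integral_congr fun t ht => min_eq_left (uIcc_of_le (by linarith : (1 : ℝ) ≤ ε / 2) ▸ ht).1
  rw [apply_zero_eq_two_mul_integral ε (by linarith),
    ← integral_add_adjacent_intervals (hI 0 1) (hI 1 _), h₁, h₂, integral_id,
    intervalIntegral.integral_const, smul_eq_mul]
  ring

lemma apply_zero_pos (hε : 0 < ε) : 0 < smoothStep ε 0 := by
  rcases le_total ε 2 with h | h
  · rw [apply_zero_of_le_two ε hε.le h]; positivity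
  · rw [apply_zero_of_two_le ε h]; linarith

lemma integrable (μ : Measure ℝ) [IsFiniteMeasure μ] (a : ℝ) :
    Integrable (fun x => smoothStep ε (x - a)) μ :=
  .of_bound ((differentiable ε).continuous.comp (continuous_sub_right a)).aestronglyMeasurable
    (smoothStep ε 0) (ae_of_all _ fun x => by
      rw [Real.norm_of_nonneg (nonneg ε _)]
      exact le_apply_zero ε _)

lemma differentiable_comp_sub (a : ℝ) : Differentiable ℝ fun x => smoothStep ε (x - a) :=
  (differentiable ε).comp (differentiable_id.sub_const a)

lemma lipschitzWith_comp_sub (a : ℝ) : LipschitzWith 1 fun x => smoothStep ε (x - a) := by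
  have h := (lipschitzWith ε).comp (IsometryEquiv.subRight a).isometry.lipschitz
  rwa [mul_one] at h

lemma lipschitzWith_deriv_comp_sub (a : ℝ) :
    LipschitzWith 1 (deriv fun x => smoothStep ε (x - a)) := by
  have h := (lipschitzWith_deriv ε).comp (IsometryEquiv.subRight a).isometry.lipschitz
  rw [mul_one] at h
  rwa [funext (deriv_comp_sub_const (smoothStep ε) a)]

lemma indicator_le_comp_sub (a : ℝ) :
    (Iic a).indicator (fun _ => smoothStep ε 0) ≤ fun x => smoothStep ε (x - a) := fun x => by
  by_cases hx : x ∈ Iic a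
  · rw [indicator_of_mem hx]
    exact (eq_of_nonpos ε (sub_nonpos.2 hx)).ge
  · rw [indicator_of_notMem hx]
    exact nonneg ε _

lemma comp_sub_le_indicator (a : ℝ) :
    (fun x => smoothStep ε (x - a)) ≤ (Iic (a + ε)).indicator (fun _ => smoothStep ε 0) :=
  fun x => by
  by_cases hx : x ∈ Iic (a + ε)
  · rw [indicator_of_mem hx]
    exact le_apply_zero ε _
  · rw [indicator_of_notMem hx]
    exact (eq_zero_of_le ε (le_sub_iff_add_le'.2 (not_le.1 hx).le)).le

end smoothStep

section Measure

variable {α : Type*} [MeasurableSpace α] {μ : Measure α} [IsFiniteMeasure μ] {s : Set α}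
  {h : α → ℝ} {D : ℝ}

lemma measureReal_mul_le_integral (hs : MeasurableSet s) (hh : Integrable h μ)
    (hle : s.indicator (fun _ => D) ≤ h) : μ.real s * D ≤ ∫ x, h x ∂μ := by
  rw [← smul_eq_mul, ← integral_indicator_const D hs]
  exact integral_mono ((integrable_const D).indicator hs) hh hle

lemma integral_le_measureReal_mul (hs : MeasurableSet s) (hh : Integrable h μ)
    (hle : h ≤ s.indicator (fun _ => D)) : ∫ x, h x ∂μ ≤ μ.real s * D := by
  rw [← smul_eq_mul, ← integral_indicator_const D hs]
  exact integral_mono hh ((integrable_const D).indicator hs) hle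

end Measure

lemma withDensity_ofReal_le_smul {α : Type*} [MeasurableSpace α] (μ : Measure α) {f : α → ℝ}
    {C : ℝ} (hf : ∀ x, f x ≤ C) :
    μ.withDensity (fun x => ENNReal.ofReal (f x)) ≤ ENNReal.ofReal C • μ := by
  rw [← withDensity_const]
  exact withDensity_mono (ae_of_all _ fun x => ENNReal.ofReal_le_ofReal (hf x))

lemma measureReal_Iic_le_add {μ : Measure ℝ} [IsFiniteMeasure μ] {C : ℝ} (hC : 0 ≤ C)
    (hμ : μ ≤ ENNReal.ofReal C • volume) {p q : ℝ} (hpq : p ≤ q) :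
    μ.real (Iic q) ≤ μ.real (Iic p) + C * (q - p) := by
  have hIoc : μ.real (Ioc p q) ≤ C * (q - p) := by
    refine ENNReal.toReal_le_of_le_ofReal (by nlinarith) ((hμ _).trans_eq ?_)
    rw [Measure.smul_apply, Real.volume_Ioc, smul_eq_mul, ← ENNReal.ofReal_mul hC]
  rw [← Iic_union_Ioc_eq_Iic hpq, measureReal_union (Iic_disjoint_Ioc le_rfl) measurableSet_Ioc]
  linarith

lemma abs_measureReal_Iic_sub_le {μ ν : Measure ℝ} [IsFiniteMeasure μ] [IsFiniteMeasure ν]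
    {C d ε : ℝ} (hC : 0 ≤ C) (hν : ν ≤ ENNReal.ofReal C • volume) (hε : 0 < ε)
    (hW : ∀ b, |(∫ x, smoothStep ε (x - b) ∂μ) - ∫ x, smoothStep ε (x - b) ∂ν| ≤ d) (a : ℝ) :
    |μ.real (Iic a) - ν.real (Iic a)| ≤ C * ε + d / smoothStep ε 0 := by
  set D := smoothStep ε 0
  have hD : 0 < D := smoothStep.apply_zero_pos ε hε
  have lower (ρ : Measure ℝ) [IsFiniteMeasure ρ] (b : ℝ) :
      ρ.real (Iic b) * D ≤ ∫ x, smoothStep ε (x - b) ∂ρ :=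
    measureReal_mul_le_integral measurableSet_Iic (smoothStep.integrable ε ρ b)
      (smoothStep.indicator_le_comp_sub ε b)
  have upper (ρ : Measure ℝ) [IsFiniteMeasure ρ] (b : ℝ) :
      ∫ x, smoothStep ε (x - b) ∂ρ ≤ ρ.real (Iic (b + ε)) * D :=
    integral_le_measureReal_mul measurableSet_Iic (smoothStep.integrable ε ρ b)
      (smoothStep.comp_sub_le_indicator ε b)
  have hνa := measureReal_Iic_le_add hC hν (le_add_of_nonneg_right hε.le : a ≤ a + ε)
  have hνa' := measureReal_Iic_le_add hC hν (sub_le_self a hε.le)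
  rw [add_sub_cancel_left] at hνa
  rw [sub_sub_cancel] at hνa'
  have hWa := abs_le.1 (hW a)
  have hWa' := abs_le.1 (hW (a - ε))
  have hUV : μ.real (Iic a) * D ≤ ν.real (Iic a) * D + C * ε * D + d := calc
    μ.real (Iic a) * D ≤ ∫ x, smoothStep ε (x - a) ∂μ := lower μ a
    _ ≤ (∫ x, smoothStep ε (x - a) ∂ν) + d := by linarith [hWa.2]
    _ ≤ ν.real (Iic (a + ε)) * D + d := by grw [upper ν a]
    _ ≤ (ν.real (Iic a) + C * ε) * D + d := by grw [hνa]
    _ = ν.real (Iic a) * D + C * ε * D + d := by ring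
  have hVU : ν.real (Iic a) * D ≤ μ.real (Iic a) * D + C * ε * D + d := calc
    ν.real (Iic a) * D ≤ (ν.real (Iic (a - ε)) + C * ε) * D := by grw [hνa']
    _ = ν.real (Iic (a - ε)) * D + C * ε * D := by ring
    _ ≤ (∫ x, smoothStep ε (x - (a - ε)) ∂ν) + C * ε * D := by grw [lower ν (a - ε)]
    _ ≤ (∫ x, smoothStep ε (x - (a - ε)) ∂μ) + C * ε * D + d := by linarith [hWa'.1]
    _ ≤ μ.real (Iic a) * D + C * ε * D + d := by
      grw [upper μ (a - ε), sub_add_cancel]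
  rw [abs_sub_le_iff, ← sub_le_iff_le_add', ← sub_le_iff_le_add', le_div_iff₀ hD, le_div_iff₀ hD]
  constructor <;> linarith

def kolmogorovBound (C d : ℝ) : ℝ := 5 * (C / 2) ^ ((2 : ℝ) / 3) * d ^ ((1 : ℝ) / 3)

section kolmogorovBound

variable {C d X : ℝ}

lemma le_kolmogorovBound_of_pow_three_le (hC : 0 ≤ C) (hd : 0 ≤ d) (hX : 0 ≤ X)
    (h : X ^ 3 ≤ 125 / 4 * C ^ 2 * d) : X ≤ kolmogorovBound C d := by
  have hcube : kolmogorovBound C d ^ 3 = 125 / 4 * C ^ 2 * d := by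
    have hC3 : ((C / 2) ^ ((2 : ℝ) / 3)) ^ 3 = (C / 2) ^ 2 := by
      rw [← Real.rpow_natCast, ← Real.rpow_mul (by positivity)]
      norm_num
    have hd3 : (d ^ ((1 : ℝ) / 3)) ^ 3 = d := by
      rw [← Real.rpow_natCast, ← Real.rpow_mul hd]
      norm_num
    rw [kolmogorovBound, mul_pow, mul_pow, hC3, hd3]
    ring
  rwa [← pow_le_pow_iff_left₀ hX (by unfold kolmogorovBound; positivity) three_ne_zero, hcube]

lemma le_kolmogorovBound_of_le (hC : 0 < C) (hd : 0 ≤ d) (hdC : d ≤ C) (hX : 0 ≤ X)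
    (h : ∀ ε, 0 < ε → ε ≤ 2 → X ≤ C * ε + d / (ε ^ 2 / 4)) : X ≤ kolmogorovBound C d := by
  rcases hd.eq_or_lt with rfl | hd
  · refine le_trans ?_ (by unfold kolmogorovBound; positivity)
    refine le_of_forall_pos_le_add fun δ hδ => ?_
    have hε : 0 < min 2 (δ / C) := lt_min two_pos (by positivity)
    calc X ≤ C * min 2 (δ / C) := by simpa using h _ hε (min_le_left _ _)
      _ ≤ C * (δ / C) := by gcongr; exact min_le_right _ _
      _ = 0 + δ := by field_simp; ring
  set t := (d / C) ^ ((1 : ℝ) / 3)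
  have ht : 0 < t := by positivity
  have ht3 : d = C * t ^ 3 := by
    rw [← Real.rpow_natCast, ← Real.rpow_mul (by positivity)]
    norm_num
    exact (mul_div_cancel₀ d hC.ne').symm
  have ht1 : t ≤ 1 := Real.rpow_le_one (by positivity) ((div_le_one hC).2 hdC) (by norm_num)
  have hX3 : X ≤ 3 * C * t := by
    convert h (2 * t) (by positivity) (by linarith) using 1
    rw [ht3]
    field_simp
    ring
  refine le_kolmogorovBound_of_pow_three_le hC.le hd.le hX ?_
  calc X ^ 3 ≤ (3 * C * t) ^ 3 := by gcongr
    _ ≤ 125 / 4 * C ^ 2 * d := by rw [ht3]; nlinarith [pow_pos hC 3, pow_pos ht 3]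

lemma le_kolmogorovBound_of_lt (hC : 0 < C) (hCd : C < d) (hd4 : d < 4 * C) (hX : 0 ≤ X)
    (h : ∀ ε, 2 ≤ ε → X ≤ C * ε + d / (ε - 1)) : X ≤ kolmogorovBound C d := by
  set u := Real.sqrt (d / C)
  have hu : d = C * u ^ 2 := by
    rw [Real.sq_sqrt (div_pos (hC.trans hCd) hC).le]
    field_simp
  have hu1 : 1 < u := by
    rw [Real.lt_sqrt zero_le_one, one_pow, one_lt_div hC]
    exact hCd
  have hu2 : u < 2 := by
    rw [Real.sqrt_lt' two_pos, div_lt_iff₀ hC]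
    linarith
  have hXu : X ≤ C * (1 + 2 * u) := by
    convert h (1 + u) (by linarith) using 1
    rw [hu, add_sub_cancel_left]
    field_simp
    ring
  refine le_kolmogorovBound_of_pow_three_le hC.le (by linarith) hX ?_
  -- `125 u² / 4 - (1 + 2u)³ = (2 - u)(32u² - 13u - 2) / 4`
  have hpoly : (1 + 2 * u) ^ 3 ≤ 125 / 4 * u ^ 2 := by
    nlinarith [mul_nonneg (sub_nonneg.2 hu2.le) (by nlinarith : 0 ≤ 32 * u ^ 2 - 13 * u - 2)]
  calc X ^ 3 ≤ (C * (1 + 2 * u)) ^ 3 := by gcongr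
    _ = C ^ 3 * (1 + 2 * u) ^ 3 := by ring
    _ ≤ C ^ 3 * (125 / 4 * u ^ 2) := by gcongr
    _ = 125 / 4 * C ^ 2 * d := by rw [hu]; ring

end kolmogorovBound

end

theorem kolmogorov_from_W2_general
    (muU muV : Measure ℝ) [IsProbabilityMeasure muU] [IsProbabilityMeasure muV]
    (C : ℝ) (hC : 0 < C)
    (f : ℝ → ℝ) (hf_bound : ∀ x, f x ≤ C)
    (hdens : muV = volume.withDensity fun x => ENNReal.ofReal (f x))
    (dW2 : ℝ)
    (hdW2 : ∀ h : ℝ → ℝ, Differentiable ℝ h → LipschitzWith 1 h →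
      LipschitzWith 1 (deriv h) → Integrable h muU → Integrable h muV →
      |(∫ x, h x ∂muU) - (∫ x, h x ∂muV)| ≤ dW2)
    (hlt : dW2 < 4 * C) :
    ∀ a : ℝ, |(muU (Set.Iic a)).toReal - (muV (Set.Iic a)).toReal|
      ≤ 5 * (C / 2) ^ ((2 : ℝ) / 3) * dW2 ^ ((1 : ℝ) / 3) := by
  intro a
  have hW (ε b : ℝ) :
      |(∫ x, smoothStep ε (x - b) ∂muU) - ∫ x, smoothStep ε (x - b) ∂muV| ≤ dW2 :=
    hdW2 _ (smoothStep.differentiable_comp_sub ε b) (smoothStep.lipschitzWith_comp_sub ε b)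
      (smoothStep.lipschitzWith_deriv_comp_sub ε b) (smoothStep.integrable ε muU b)
      (smoothStep.integrable ε muV b)
  have hd : 0 ≤ dW2 := (abs_nonneg _).trans (hW 1 0)
  have hV : muV ≤ ENNReal.ofReal C • volume := hdens ▸ withDensity_ofReal_le_smul volume hf_bound
  have hsmooth (ε : ℝ) (hε : 0 < ε) := abs_measureReal_Iic_sub_le hC.le hV hε (hW ε) a
  rcases le_or_gt dW2 C with hdC | hCd
  · exact le_kolmogorovBound_of_le hC hd hdC (abs_nonneg _) fun ε hε hε₂ => by
      simpa only [smoothStep.apply_zero_of_le_two ε hε.le hε₂, measureReal_def] using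
        hsmooth ε hε
  · exact le_kolmogorovBound_of_lt hC hCd hlt (abs_nonneg _) fun ε hε => by
      simpa only [smoothStep.apply_zero_of_two_le ε hε, measureReal_def] using
        hsmooth ε (by linarith)

/-- If `V` has a density bounded by `C` and the `W₂` distance between `U` and
`V` is less than `4C`, then the Kolmogorov distance is at most
`5·(C/2)^(2/3)·d_{W₂}(U,V)^(1/3)`. -/
theorem kolmogorov_from_W2
    (muU muV : Measure ℝ) [IsProbabilityMeasure muU] [IsProbabilityMeasure muV]
    (C : ℝ) (hC : 0 < C)
    (f : ℝ → ℝ) (hf_meas : Measurable f)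
    (hf_nonneg : ∀ x, 0 ≤ f x) (hf_bound : ∀ x, f x ≤ C)
    (hdens : muV = volume.withDensity fun x => ENNReal.ofReal (f x))
    (dW2 : ℝ)
    (hdW2 : ∀ h : ℝ → ℝ, Differentiable ℝ h → LipschitzWith 1 h →
      LipschitzWith 1 (deriv h) → Integrable h muU → Integrable h muV →
      |(∫ x, h x ∂muU) - (∫ x, h x ∂muV)| ≤ dW2)
    (hlt : dW2 < 4 * C) :
    ∀ a : ℝ, |(muU (Set.Iic a)).toReal - (muV (Set.Iic a)).toReal|
      ≤ 5 * (C / 2) ^ ((2 : ℝ) / 3) * dW2 ^ ((1 : ℝ) / 3) :=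
  kolmogorov_from_W2_general muU muV C hC f hf_bound hdens dW2 hdW2 hlt
end

section
/- There exists a constant C > 0 such that for all λ > 0, μ > 0 and integers n ≥ 1 with R = λ/μ < n and ρ := R/n ≥ 0.1, writing W := X̃(∞), the following hold: (i) for every γ > (2 + δ|ζ|)/(2|ζ|), E[exp((2|ζ|/(2+δ|ζ|) − 1/γ)·W)·1(W ≥ −ζ)] ≤ γ·C·e^{2ζ²/(2+δ|ζ|)}; and (ii) E[exp((2|ζ|/(2+δ|ζ|))·W)·1(W ≥ −ζ)] ≤ δ^{−2}·(1/|ζ| + δ)³·C·e^{2ζ²/(2+δ|ζ|)}. -/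
/-!
On the event `{W ≥ -ζ}` = `{k ≥ n}` the stationary law is geometric, `π (n + j) = π n * ρ ^ j`, so
each truncated moment generating function is a geometric series
`π n * exp (θ |ζ|) / (1 - ρ exp (θ δ))`. Writing `x = δ |ζ|`, one has `ρ = 1 / (1 + x)` and, for
`θ = 2 |ζ| / (2 + x)`, `θ δ = 2x / (2 + x)`; the sharpened Padé bound
`log (1 + x) ≥ 2x / (2 + x) + x³ / (12 (1 + x)³)` keeps the ratio `ρ exp (θ δ)` below
`1 - x³ / (13 (1 + x)³)`, which gives (ii). In (i) the extra factor `exp (-δ/γ)` provides the gap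
`1 - exp (-δ/γ) ≥ (δ/γ) / (1 + δ/γ)` instead, and `γ > δ/2`. In both parts the prefactor is
controlled by `π n ≤ 2δ`: the balance equations keep `π (n - j) ≥ π n / 2` for the `√R` states
`j ≤ √R` just below `n`.
-/

open Real Set

theorem two_mul_div_two_add_add_le_log_one_add {x : ℝ} (hx : 0 ≤ x) :
    2 * x / (2 + x) + x ^ 3 / (12 * (1 + x) ^ 3) ≤ log (1 + x) := by
  let F : ℝ → ℝ := fun y => log (1 + y) - 2 * y / (2 + y) - y ^ 3 / (12 * (1 + y) ^ 3)
  have hF' : ∀ y, 0 ≤ y → HasDerivAt F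
      (1 / (1 + y) - 4 / (2 + y) ^ 2 - y ^ 2 / (4 * (1 + y) ^ 4)) y := by
    intro y hy
    have h1 : 1 + y ≠ 0 := by linarith
    have h2 : 2 + y ≠ 0 := by linarith
    have hlog := ((hasDerivAt_id' y).const_add 1).log h1
    have hfrac := ((hasDerivAt_id' y).const_mul 2).fun_div ((hasDerivAt_id' y).const_add 2) h2
    have hcube := ((hasDerivAt_id' y).fun_pow 3).fun_div
      ((((hasDerivAt_id' y).const_add 1).fun_pow 3).const_mul 12) (by simp [h1])
    refine ((hlog.fun_sub hfrac).fun_sub hcube).congr_deriv ?_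
    field_simp
    ring
  have hmono : MonotoneOn F (Ici 0) := by
    refine monotoneOn_of_hasDerivWithinAt_nonneg (convex_Ici 0)
      (fun y hy => (hF' y hy).continuousAt.continuousWithinAt)
      (fun y hy => (hF' y (interior_subset hy : y ∈ Ici 0)).hasDerivWithinAt) ?_
    intro y hy
    have hy : 0 ≤ y := (interior_subset hy : y ∈ Ici (0:ℝ))
    have key : 1 / (1 + y) - 4 / (2 + y) ^ 2 - y ^ 2 / (4 * (1 + y) ^ 4)
        = y ^ 2 * (4 * (1 + y) ^ 3 - (2 + y) ^ 2) / (4 * (1 + y) ^ 4 * (2 + y) ^ 2) := by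
      field_simp
      ring
    rw [key]
    have : 0 ≤ 4 * (1 + y) ^ 3 - (2 + y) ^ 2 := by nlinarith [pow_nonneg hy 3, sq_nonneg y]
    positivity
  have hF0 : F 0 = 0 := by simp [F]
  have hFx : F x = log (1 + x) - 2 * x / (2 + x) - x ^ 3 / (12 * (1 + x) ^ 3) := rfl
  linarith [hmono self_mem_Ici hx hx]

theorem div_one_add_le_one_sub_exp_neg {t : ℝ} (ht : -1 < t) : t / (1 + t) ≤ 1 - exp (-t) := by
  have h1t : 0 < 1 + t := by linarith
  have : exp (-t) ≤ 1 / (1 + t) := by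
    rw [exp_neg, one_div]
    exact inv_anti₀ h1t (by linarith [add_one_le_exp t])
  calc t / (1 + t) = 1 - 1 / (1 + t) := by field_simp; ring
    _ ≤ 1 - exp (-t) := by linarith

theorem hasSum_of_eq_zero_of_geometric {f : ℕ → ℝ} {n : ℕ} {a r : ℝ} (hr : |r| < 1)
    (hlt : ∀ k < n, f k = 0) (hge : ∀ j, f (j + n) = a * r ^ j) : HasSum f (a / (1 - r)) := by
  rw [← hasSum_nat_add_iff' n, Finset.sum_eq_zero fun k hk => hlt k (Finset.mem_range.mp hk),
    sub_zero, funext hge, div_eq_mul_inv]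
  exact (hasSum_geometric_of_abs_lt_one hr).mul_left a

theorem mul_le_tsum_of_forall_le_sub {p : ℕ → ℝ} (hp : ∀ k, 0 ≤ p k) (hs : Summable p) {n : ℕ}
    {x c : ℝ} (hx : 0 ≤ x) (hxn : x < n + 1) (hc : 0 ≤ c)
    (h : ∀ j : ℕ, (j : ℝ) ≤ x → c ≤ p (n - j)) : x * c ≤ ∑' k, p k := by
  set m := ⌊x⌋₊
  have hmn : m ≤ n := Nat.lt_succ_iff.mp ((Nat.floor_lt hx).mpr (by exact_mod_cast hxn))
  calc x * c ≤ (m + 1 : ℕ) • c := by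
        rw [nsmul_eq_mul]; push_cast
        exact mul_le_mul_of_nonneg_right (Nat.lt_floor_add_one x).le hc
    _ ≤ ∑ j ∈ Finset.range (m + 1), p (n - j) := by
        simpa using Finset.card_nsmul_le_sum (Finset.range (m + 1)) (fun j => p (n - j)) c
          fun j hj => h j <| (Nat.cast_le.mpr (Nat.lt_succ_iff.mp (Finset.mem_range.mp hj))).trans
            (Nat.floor_le hx)
    _ = ∑ k ∈ (Finset.range (m + 1)).image (n - ·), p k := by
        refine (Finset.sum_image fun a ha b hb hab => ?_).symm
        simp only [Finset.coe_range, Set.mem_Iio] at ha hb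
        omega
    _ ≤ ∑' k, p k := hs.sum_le_tsum _ fun k _ => hp k

theorem exp_two_mul_div_two_add_div_le {x : ℝ} (hx : 0 ≤ x) :
    exp (2 * x / (2 + x)) / (1 + x) ≤ 1 - x ^ 3 / (13 * (1 + x) ^ 3) := by
  set u := x ^ 3 / (12 * (1 + x) ^ 3) with hu
  have h1x : 0 < 1 + x := by linarith
  have hu0 : 0 ≤ u := by positivity
  have hu1 : u ≤ 1 / 12 := by
    rw [hu, div_le_iff₀ (by positivity)]
    nlinarith [pow_le_pow_left₀ hx (by linarith : x ≤ 1 + x) 3]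
  calc exp (2 * x / (2 + x)) / (1 + x) = exp (2 * x / (2 + x) - log (1 + x)) := by
        rw [exp_sub, exp_log h1x]
    _ ≤ exp (-u) := exp_le_exp.mpr (by linarith [two_mul_div_two_add_add_le_log_one_add hx])
    _ ≤ 1 - u / (1 + u) := by linarith [div_one_add_le_one_sub_exp_neg (by linarith : -1 < u)]
    _ ≤ 1 - x ^ 3 / (13 * (1 + x) ^ 3) := by
        have h12 : x ^ 3 / (13 * (1 + x) ^ 3) = 12 * u / 13 := by rw [hu]; field_simp
        rw [h12, sub_le_sub_iff_left, div_le_div_iff₀ (by norm_num) (by linarith)]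
        nlinarith

section ErlangC

variable {R δ ζ : ℝ} {n : ℕ} {p : ℕ → ℝ}

theorem balance_sub_succ (hbal : ∀ k : ℕ, R * p k = min ((k : ℝ) + 1) n * p (k + 1)) {j : ℕ}
    (hj : j < n) : R * p (n - (j + 1)) = (n - j) * p (n - j) := by
  have hk : n - (j + 1) + 1 = n - j := by omega
  have hcast : ((n - (j + 1) : ℕ) : ℝ) + 1 = n - j := by rw [Nat.cast_sub hj]; push_cast; ring
  rw [hbal, hk, hcast, min_eq_left (sub_le_self _ (Nat.cast_nonneg j))]

theorem tail_eq_geometric (hn : n ≠ 0) (hbal : ∀ k : ℕ, R * p k = min ((k : ℝ) + 1) n * p (k + 1))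
    (j : ℕ) : p (j + n) = p n * (R / n) ^ j := by
  induction j with
  | zero => simp
  | succ j ih =>
    have hstep := hbal (j + n)
    rw [min_eq_right (by push_cast; linarith [(Nat.cast_nonneg j : (0 : ℝ) ≤ j)])] at hstep
    rw [show j + 1 + n = j + n + 1 by ring, pow_succ, ← mul_assoc, ← ih]
    field_simp
    linarith

theorem mul_two_mul_sub_sq_le (hR : 0 < R) (hRn : R ≤ n) (hp : ∀ k, 0 ≤ p k)
    (hbal : ∀ k : ℕ, R * p k = min ((k : ℝ) + 1) n * p (k + 1)) :
    ∀ j ≤ n, p n * (2 * R - j ^ 2) ≤ 2 * R * p (n - j) := by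
  intro j
  induction j with
  | zero => intro _; simp [mul_comm]
  | succ j ih =>
    intro hj
    -- Going one state down multiplies `p` by `(n - j) / R ≥ 1 - j / R`, and
    -- `(1 - j / R) (2R - j²) ≥ 2R - (j + 1)²`; for `j > R` the left side is negative anyway.
    have hstep := balance_sub_succ hbal hj
    have IH := ih (by omega)
    have hpj := hp (n - j)
    have hpn := hp n
    have hpj1 := hp (n - (j + 1))
    push_cast
    by_cases hjR : (j : ℝ) ≤ R
    · have h1 := mul_le_mul_of_nonneg_left IH (sub_nonneg.mpr hjR)
      have h2 : 0 ≤ p n * ((j : ℝ) ^ 3 + R) := by positivity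
      have h3 : 0 ≤ ((n : ℝ) - R) * p (n - j) := mul_nonneg (by linarith) hpj
      refine le_of_mul_le_mul_left ?_ hR
      nlinarith
    · nlinarith

theorem mul_sqrt_le_two_mul_tsum (hR : 0 < R) (hRn : R < n) (hp : ∀ k, 0 ≤ p k)
    (hs : Summable p) (hbal : ∀ k : ℕ, R * p k = min ((k : ℝ) + 1) n * p (k + 1)) :
    p n * √R ≤ 2 * ∑' k, p k := by
  have hsqrt : √R < n + 1 := by
    rw [sqrt_lt' (by positivity)]
    nlinarith [(Nat.cast_nonneg n : (0 : ℝ) ≤ n)]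
  suffices h : √R * (p n / 2) ≤ ∑' k, p k by linarith
  refine mul_le_tsum_of_forall_le_sub hp hs (sqrt_nonneg R) hsqrt (by linarith [hp n]) ?_
  intro j hj
  have hj2 : (j : ℝ) ^ 2 ≤ R := by
    nlinarith [sq_sqrt hR.le, (Nat.cast_nonneg j : (0 : ℝ) ≤ j)]
  have hjn : j ≤ n := Nat.lt_add_one_iff.mp (by exact_mod_cast hj.trans_lt hsqrt)
  have := mul_two_mul_sub_sq_le hR hRn.le hp hbal j hjn
  nlinarith [hp n]

theorem hasSum_exp_tail (hR : 0 < R) (hRn : R < n)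
    (hbal : ∀ k : ℕ, R * p k = min ((k : ℝ) + 1) n * p (k + 1)) {θ : ℝ} (hδ : 0 < δ)
    (hζ : ζ = δ * (R - n)) (hq : R / n * exp (θ * δ) < 1) :
    HasSum (fun k : ℕ => if -ζ ≤ δ * ((k : ℝ) - R) then p k * exp (θ * (δ * ((k : ℝ) - R))) else 0)
      (p n * exp (θ * (δ * (n - R))) / (1 - R / n * exp (θ * δ))) := by
  have hn : n ≠ 0 := by rintro rfl; simp at hRn; linarith
  have hevent : ∀ k : ℕ, -ζ ≤ δ * ((k : ℝ) - R) ↔ n ≤ k := fun k => by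
    rw [hζ, show -(δ * (R - n)) = δ * (n - R) by ring, mul_le_mul_iff_right₀ hδ,
      sub_le_sub_iff_right, Nat.cast_le]
  have hq0 : 0 ≤ R / n * exp (θ * δ) := by positivity
  refine hasSum_of_eq_zero_of_geometric (n := n) (abs_lt.mpr ⟨by linarith, hq⟩) ?_ ?_
  · intro k hk
    rw [if_neg (by rw [hevent]; omega)]
  · intro j
    rw [if_pos ((hevent _).mpr (by omega)), tail_eq_geometric hn hbal j,
      show θ * (δ * (((j + n : ℕ) : ℝ) - R)) = θ * (δ * (n - R)) + j * (θ * δ) by push_cast; ring,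
      exp_add, exp_nat_mul, mul_pow]
    ring

theorem abs_eq_mul_sub_of_eq (hδ : 0 < δ) (hRn : R < n) (hζ : ζ = δ * (R - n)) :
    |ζ| = δ * (n - R) := by
  rw [hζ, abs_of_neg (mul_neg_of_pos_of_neg hδ (by linarith))]
  ring

theorem div_eq_one_div_one_add (hR : 0 < R) (hRn : R < n) (hδ : δ = 1 / √R)
    (hζ : ζ = δ * (R - n)) : R / n = 1 / (1 + δ * |ζ|) := by
  have hδR : δ ^ 2 * R = 1 := by rw [hδ, div_pow, sq_sqrt hR.le]; field_simp
  rw [abs_eq_mul_sub_of_eq (by rw [hδ]; positivity) hRn hζ,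
    div_eq_div_iff (by linarith) (by nlinarith [sq_nonneg δ])]
  linear_combination (n - R) * hδR

theorem ratio_mul_exp_le (hR : 0 < R) (hRn : R < n) (hδ : δ = 1 / √R) (hζ : ζ = δ * (R - n)) :
    R / n * exp (2 * |ζ| / (2 + δ * |ζ|) * δ)
      ≤ 1 - (δ * |ζ|) ^ 3 / (13 * (1 + δ * |ζ|) ^ 3) := by
  have hx : 0 ≤ δ * |ζ| := mul_nonneg (by rw [hδ]; positivity) (abs_nonneg ζ)
  rw [div_eq_one_div_one_add hR hRn hδ hζ, one_div_mul_eq_div,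
    show 2 * |ζ| / (2 + δ * |ζ|) * δ = 2 * (δ * |ζ|) / (2 + δ * |ζ|) by ring]
  exact exp_two_mul_div_two_add_div_le hx

theorem tail_mgf_le (hR : 0 < R) (hRn : R < n) (hδ : δ = 1 / √R) (hζ : ζ = δ * (R - n))
    (hbal : ∀ k : ℕ, R * p k = min ((k : ℝ) + 1) n * p (k + 1)) (hpn : p n ≤ 2 * δ) :
    (Summable fun k : ℕ => if -ζ ≤ δ * ((k : ℝ) - R)
        then p k * exp (2 * |ζ| / (2 + δ * |ζ|) * (δ * ((k : ℝ) - R))) else 0) ∧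
      ∑' k : ℕ, (if -ζ ≤ δ * ((k : ℝ) - R)
        then p k * exp (2 * |ζ| / (2 + δ * |ζ|) * (δ * ((k : ℝ) - R))) else 0)
        ≤ 1 / δ ^ 2 * (1 / |ζ| + δ) ^ 3 * 26 * exp (2 * ζ ^ 2 / (2 + δ * |ζ|)) := by
  have hδ0 : 0 < δ := by rw [hδ]; positivity
  have habs := abs_eq_mul_sub_of_eq hδ0 hRn hζ
  have hζ0 : 0 < |ζ| := by rw [habs]; exact mul_pos hδ0 (by linarith)
  have hq := ratio_mul_exp_le hR hRn hδ hζ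
  have hgap : 0 < (δ * |ζ|) ^ 3 / (13 * (1 + δ * |ζ|) ^ 3) := by positivity
  have hS := hasSum_exp_tail hR hRn hbal hδ0 hζ (hq.trans_lt (sub_lt_self _ hgap))
  have hE : 2 * |ζ| / (2 + δ * |ζ|) * (δ * (n - R)) = 2 * ζ ^ 2 / (2 + δ * |ζ|) := by
    rw [← habs, ← sq_abs ζ]; ring
  refine ⟨hS.summable, ?_⟩
  rw [hS.tsum_eq, hE]
  calc p n * exp (2 * ζ ^ 2 / (2 + δ * |ζ|)) / (1 - R / n * exp (2 * |ζ| / (2 + δ * |ζ|) * δ))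
      ≤ 2 * δ * exp (2 * ζ ^ 2 / (2 + δ * |ζ|)) / ((δ * |ζ|) ^ 3 / (13 * (1 + δ * |ζ|) ^ 3)) :=
        div_le_div₀ (by positivity) (by gcongr) hgap (by linarith)
    _ = 1 / δ ^ 2 * (1 / |ζ| + δ) ^ 3 * 26 * exp (2 * ζ ^ 2 / (2 + δ * |ζ|)) := by
        field_simp
        ring

theorem tail_mgf_sub_inv_le (hR : 0 < R) (hRn : R < n) (hδ : δ = 1 / √R) (hζ : ζ = δ * (R - n))
    (hbal : ∀ k : ℕ, R * p k = min ((k : ℝ) + 1) n * p (k + 1)) (hpn₀ : 0 ≤ p n)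
    (hpn : p n ≤ 2 * δ) {γ C : ℝ}
    (hγ : (2 + δ * |ζ|) / (2 * |ζ|) < γ) (hC : 6 ≤ C) :
    (Summable fun k : ℕ => if -ζ ≤ δ * ((k : ℝ) - R)
        then p k * exp ((2 * |ζ| / (2 + δ * |ζ|) - 1 / γ) * (δ * ((k : ℝ) - R))) else 0) ∧
      ∑' k : ℕ, (if -ζ ≤ δ * ((k : ℝ) - R)
        then p k * exp ((2 * |ζ| / (2 + δ * |ζ|) - 1 / γ) * (δ * ((k : ℝ) - R))) else 0)
        ≤ γ * C * exp (2 * ζ ^ 2 / (2 + δ * |ζ|)) := by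
  have hδ0 : 0 < δ := by rw [hδ]; positivity
  have habs := abs_eq_mul_sub_of_eq hδ0 hRn hζ
  have hζ0 : 0 < |ζ| := by rw [habs]; exact mul_pos hδ0 (by linarith)
  have hγδ : 1 / |ζ| + δ / 2 < γ := by
    rwa [show (2 + δ * |ζ|) / (2 * |ζ|) = 1 / |ζ| + δ / 2 by field_simp] at hγ
  have hγ0 : 0 < γ := by linarith [one_div_pos.mpr hζ0]
  have hE : 2 * |ζ| / (2 + δ * |ζ|) * (δ * (n - R)) = 2 * ζ ^ 2 / (2 + δ * |ζ|) := by
    rw [← habs, ← sq_abs ζ]; ring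
  set θ := 2 * |ζ| / (2 + δ * |ζ|)
  set E := 2 * ζ ^ 2 / (2 + δ * |ζ|)
  set t := δ / γ with ht_def
  have ht : 0 < t := div_pos hδ0 hγ0
  have hq0 : R / n * exp (θ * δ) ≤ 1 := by
    have := ratio_mul_exp_le hR hRn hδ hζ
    have : 0 ≤ (δ * |ζ|) ^ 3 / (13 * (1 + δ * |ζ|) ^ 3) := by positivity
    linarith
  have hq : R / n * exp ((θ - 1 / γ) * δ) ≤ exp (-t) := by
    rw [show (θ - 1 / γ) * δ = θ * δ + -t by ring, exp_add, ← mul_assoc]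
    exact mul_le_of_le_one_left (exp_pos _).le hq0
  have hexpt : exp (-t) < 1 := exp_lt_one_iff.mpr (by linarith)
  have hS := hasSum_exp_tail hR hRn hbal hδ0 hζ (hq.trans_lt hexpt)
  have hexponent : (θ - 1 / γ) * (δ * (n - R)) ≤ E := by
    have hX : 0 ≤ δ * (n - R) := habs ▸ abs_nonneg ζ
    rw [sub_mul, hE]
    exact sub_le_self _ (by positivity)
  refine ⟨hS.summable, ?_⟩
  rw [hS.tsum_eq]
  calc p n * exp ((θ - 1 / γ) * (δ * (n - R))) / (1 - R / n * exp ((θ - 1 / γ) * δ))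
      ≤ p n * exp E / (1 - exp (-t)) :=
        div_le_div₀ (by positivity) (by gcongr) (by linarith) (by linarith)
    _ ≤ p n * exp E / (t / (1 + t)) :=
        div_le_div_of_nonneg_left (by positivity) (by positivity)
          (div_one_add_le_one_sub_exp_neg (by linarith))
    _ = p n * (γ / δ + 1) * exp E := by rw [ht_def]; field_simp
    _ ≤ 2 * δ * (γ / δ + 1) * exp E := by gcongr
    _ = (2 * γ + 2 * δ) * exp E := by field_simp
    _ ≤ γ * C * exp E := by
        gcongr
        nlinarith [mul_le_mul_of_nonneg_left hC hγ0.le, one_div_pos.mpr hζ0]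

end ErlangC

/-- Moment generating function bounds for the scaled stationary Erlang-C
customer count `W = X̃(∞)` on the event `{W ≥ -ζ}`, valid whenever the
utilization satisfies `ρ ≥ 0.1`. -/
theorem erlangC_mgf_bounds :
    ∃ C : ℝ, 0 < C ∧
      ∀ (lam mu : ℝ) (n : ℕ), 0 < lam → 0 < mu → 1 ≤ n →
      ∀ R δ ζ rho : ℝ,
        R = lam / mu → R < (n : ℝ) →
        δ = 1 / Real.sqrt R → ζ = δ * (R - (n : ℝ)) →
        rho = R / (n : ℝ) → (0.1 : ℝ) ≤ rho →
      ∀ pi : ℕ → ℝ,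
        (∀ k, 0 ≤ pi k) → (∑' k : ℕ, pi k) = 1 →
        (∀ k : ℕ, lam * pi k = mu * min ((k : ℝ) + 1) (n : ℝ) * pi (k + 1)) →
      (∀ gam : ℝ, (2 + δ * |ζ|) / (2 * |ζ|) < gam →
        (Summable fun k : ℕ =>
          if -ζ ≤ δ * ((k : ℝ) - R)
          then pi k * Real.exp ((2 * |ζ| / (2 + δ * |ζ|) - 1 / gam) * (δ * ((k : ℝ) - R)))
          else 0) ∧
        (∑' k : ℕ,
          if -ζ ≤ δ * ((k : ℝ) - R)
          then pi k * Real.exp ((2 * |ζ| / (2 + δ * |ζ|) - 1 / gam) * (δ * ((k : ℝ) - R)))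
          else 0)
          ≤ gam * C * Real.exp (2 * ζ ^ 2 / (2 + δ * |ζ|))) ∧
      ((Summable fun k : ℕ =>
          if -ζ ≤ δ * ((k : ℝ) - R)
          then pi k * Real.exp ((2 * |ζ| / (2 + δ * |ζ|)) * (δ * ((k : ℝ) - R)))
          else 0) ∧
        (∑' k : ℕ,
          if -ζ ≤ δ * ((k : ℝ) - R)
          then pi k * Real.exp ((2 * |ζ| / (2 + δ * |ζ|)) * (δ * ((k : ℝ) - R)))
          else 0)
          ≤ (1 / δ ^ 2) * (1 / |ζ| + δ) ^ 3 * C * Real.exp (2 * ζ ^ 2 / (2 + δ * |ζ|))) := by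
  refine ⟨26, by norm_num, ?_⟩
  intro lam mu n hlam hmu _ R δ ζ _ hR hRn hδ hζ _ _ pi hpos htot hbal
  have hR0 : 0 < R := hR ▸ div_pos hlam hmu
  have hbalR : ∀ k : ℕ, R * pi k = min ((k : ℝ) + 1) n * pi (k + 1) := fun k => by
    rw [hR, div_mul_eq_mul_div, div_eq_iff hmu.ne', hbal k]
    ring
  have hsum : Summable pi := by
    by_contra h
    exact one_ne_zero (htot ▸ tsum_eq_zero_of_not_summable h)
  have hpn : pi n ≤ 2 * δ := by
    have := mul_sqrt_le_two_mul_tsum hR0 hRn hpos hsum hbalR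
    rwa [htot, mul_one, ← le_div_iff₀ (sqrt_pos.mpr hR0), ← mul_one_div, ← hδ] at this
  exact ⟨fun gam hgam => tail_mgf_sub_inv_le hR0 hRn hδ hζ hbalR (hpos n) hpn hgam (by norm_num),
    tail_mgf_le hR0 hRn hδ hζ hbalR hpn⟩
end

section
/- Let ā : ℝ → ℝ be continuous with ā(x) > 0 for all x, let b̄ : ℝ → ℝ be continuous, and suppose ∫_ℝ (2/ā(x))·exp(∫₀ˣ 2b̄(u)/ā(u) du) dx < ∞. Let V be the random variable with density proportional to (2/ā(x))·exp(∫₀ˣ 2b̄(u)/ā(u) du), and let h : ℝ → ℝ be continuous with E|h(V)| < ∞. Then for every x ∈ ℝ the two expressions e^{−∫₀ˣ 2b̄/ā}·∫_{−∞}^x (2/ā(y))(E h(V) − h(y))·e^{∫₀ʸ 2b̄/ā} dy and −e^{−∫₀ˣ 2b̄/ā}·∫_x^∞ (2/ā(y))(E h(V) − h(y))·e^{∫₀ʸ 2b̄/ā} dy are finite and equal; moreover, denoting their common value g(x), the function g is continuously differentiable and satisfies the Poisson equation (1/2)·ā(x)·g′(x) + b̄(x)·g(x) = E h(V) − h(x)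 for all x ∈ ℝ. -/
open MeasureTheory Set

/-- Existence and properties of the solution of the one-dimensional Poisson
equation `(1/2)·ā·f″ + b̄·f′ = E h(V) − h` for a diffusion with stationary
density proportional to `(2/ā(x))·exp(∫₀ˣ 2b̄/ā)`: the two integral expressions
for the derivative `g = f′` are finite and equal, `g` is continuously
differentiable, and `g` satisfies the Poisson equation. -/
theorem poisson_equation_solution
    (abar bbar : ℝ → ℝ)
    (ha_cont : Continuous abar) (ha_pos : ∀ x, 0 < abar x)
    (hb_cont : Continuous bbar)
    (p : ℝ → ℝ)
    (hp : ∀ x : ℝ, p x = Real.exp (∫ u in (0:ℝ)..x, 2 * bbar u / abar u))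
    (hint : Integrable fun x : ℝ => 2 / abar x * p x)
    (h : ℝ → ℝ) (hh : Continuous h)
    (hhint : Integrable fun x : ℝ => |h x| * (2 / abar x * p x))
    (M : ℝ)
    (hM : M = (∫ x : ℝ, h x * (2 / abar x * p x)) / (∫ x : ℝ, 2 / abar x * p x))
    (g : ℝ → ℝ)
    (hg : ∀ x : ℝ, g x = (p x)⁻¹ * ∫ y in Set.Iic x, 2 / abar y * (M - h y) * p y) :
    (∀ x : ℝ,
      IntegrableOn (fun y => 2 / abar y * (M - h y) * p y) (Set.Iic x) ∧
      IntegrableOn (fun y => 2 / abar y * (M - h y) * p y) (Set.Ici x) ∧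
      g x = -((p x)⁻¹ * ∫ y in Set.Ici x, 2 / abar y * (M - h y) * p y)) ∧
    ContDiff ℝ 1 g ∧
    (∀ x : ℝ, HasDerivAt g (2 / abar x * (M - h x) - 2 * bbar x / abar x * g x) x) ∧
    (∀ x : ℝ, (1 / 2) * abar x * deriv g x + bbar x * g x = M - h x) := by
  have ha_ne : ∀ x, abar x ≠ 0 := fun x => (ha_pos x).ne'
  -- the exponent B and its derivative
  set B : ℝ → ℝ := fun t => ∫ u in (0:ℝ)..t, 2 * bbar u / abar u with hBdef
  have hc : Continuous fun u => 2 * bbar u / abar u :=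
    (continuous_const.mul hb_cont).div ha_cont ha_ne
  have hB : ∀ x, HasDerivAt B (2 * bbar x / abar x) x := fun x =>
    intervalIntegral.integral_hasDerivAt_right (hc.intervalIntegrable _ _)
      hc.aestronglyMeasurable.stronglyMeasurableAtFilter hc.continuousAt
  have hp_eq : ∀ x, p x = Real.exp (B x) := hp
  have hp_cont : Continuous p := by
    have hBc : Continuous B := continuous_iff_continuousAt.mpr fun x => (hB x).continuousAt
    exact (Real.continuous_exp.comp hBc).congr fun x => (hp_eq x).symm
  have hp_pos : ∀ x, 0 < p x := fun x => (hp_eq x) ▸ Real.exp_pos _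
  set q : ℝ → ℝ := fun x => 2 / abar x * p x with hqdef
  have hq_cont : Continuous q := (continuous_const.div ha_cont ha_ne).mul hp_cont
  have hq_pos : ∀ x, 0 < q x := fun x =>
    mul_pos (div_pos two_pos (ha_pos x)) (hp_pos x)
  set F : ℝ → ℝ := fun y => 2 / abar y * (M - h y) * p y with hFdef
  have hF_eq : ∀ y, F y = M * q y - h y * q y := fun y => by
    simp only [hFdef, hqdef]; ring
  have hF_cont : Continuous F :=
    ((continuous_const.div ha_cont ha_ne).mul (continuous_const.sub hh)).mul hp_cont
  -- integrability of F
  have hhq_int : Integrable fun y => h y * q y := by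
    refine hhint.mono' (hh.mul hq_cont).aestronglyMeasurable ?_
    filter_upwards with y
    rw [Real.norm_eq_abs, abs_mul, abs_of_nonneg (hq_pos y).le]
  have hF_int : Integrable F := by
    have : Integrable fun y => M * q y - h y * q y := (hint.const_mul M).sub hhq_int
    exact this.congr (by filter_upwards with y; exact (hF_eq y).symm)
  -- total integral of F is zero
  have hQ_pos : 0 < ∫ x, q x := by
    rw [integral_pos_iff_support_of_nonneg (fun x => (hq_pos x).le) hint]
    have : Function.support q = Set.univ := Set.eq_univ_of_forall fun x => (hq_pos x).ne'
    rw [this, Real.volume_univ]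
    exact ENNReal.zero_lt_top
  have hzero : ∫ y, F y = 0 := by
    have h1 : ∫ y, F y = M * (∫ y, q y) - ∫ y, h y * q y := by
      rw [integral_congr_ae (Filter.Eventually.of_forall hF_eq),
        integral_sub (hint.const_mul M) hhq_int, integral_const_mul]
    rw [h1, hM, div_mul_cancel₀ _ hQ_pos.ne', sub_self]
  have hIic : ∀ x : ℝ, IntegrableOn F (Set.Iic x) := fun x => hF_int.integrableOn
  have hIci : ∀ x : ℝ, IntegrableOn F (Set.Ici x) := fun x => hF_int.integrableOn
  have hsplit : ∀ x : ℝ, (∫ y in Set.Iic x, F y) = -(∫ y in Set.Ici x, F y) := by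
    intro x
    have := intervalIntegral.integral_Iio_add_Ici (b := x) hF_int.integrableOn hF_int.integrableOn
    rw [hzero] at this
    rw [MeasureTheory.integral_Iic_eq_integral_Iio]
    linarith
  -- derivative of the primitive G
  set G : ℝ → ℝ := fun x => ∫ y in Set.Iic x, F y with hGdef
  have hG : ∀ x, HasDerivAt G (F x) x := by
    intro x
    have key : ∀ t : ℝ, G t = G 0 + ∫ y in (0:ℝ)..t, F y := by
      intro t
      rw [← intervalIntegral.integral_Iic_sub_Iic (hIic 0) (hIic t)]
      simp [hGdef]
    have hd : HasDerivAt (fun t => G 0 + ∫ y in (0:ℝ)..t, F y) (F x) x :=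
      (intervalIntegral.integral_hasDerivAt_right hF_int.intervalIntegrable
        hF_cont.aestronglyMeasurable.stronglyMeasurableAtFilter hF_cont.continuousAt).const_add _
    exact hd.congr_of_eventuallyEq (Filter.Eventually.of_forall key)
  -- g as an explicit function
  have hg_eq : ∀ x, g x = Real.exp (-B x) * G x := by
    intro x
    rw [hg x, hp_eq x, ← Real.exp_neg]
  have hder : ∀ x : ℝ, HasDerivAt g (2 / abar x * (M - h x) - 2 * bbar x / abar x * g x) x := by
    intro x
    have he : HasDerivAt (fun t => Real.exp (-B t)) (Real.exp (-B x) * -(2 * bbar x / abar x)) x :=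
      (hB x).neg.exp
    have hmul : HasDerivAt (fun t => Real.exp (-B t) * G t)
        (Real.exp (-B x) * -(2 * bbar x / abar x) * G x + Real.exp (-B x) * F x) x :=
      he.mul (hG x)
    have hfun : HasDerivAt g
        (Real.exp (-B x) * -(2 * bbar x / abar x) * G x + Real.exp (-B x) * F x) x :=
      hmul.congr_of_eventuallyEq (Filter.Eventually.of_forall hg_eq)
    have hval : Real.exp (-B x) * -(2 * bbar x / abar x) * G x + Real.exp (-B x) * F x
        = 2 / abar x * (M - h x) - 2 * bbar x / abar x * g x := by
      have hpe : Real.exp (-B x) * Real.exp (B x) = 1 := by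
        rw [← Real.exp_add]; simp
      rw [hg_eq x, hFdef]
      simp only [hp_eq x]
      linear_combination (2 / abar x * (M - h x)) * hpe
    rwa [hval] at hfun
  have hdiff : Differentiable ℝ g := fun x => (hder x).differentiableAt
  have hderiv_eq : deriv g = fun x => 2 / abar x * (M - h x) - 2 * bbar x / abar x * g x :=
    funext fun x => (hder x).deriv
  refine ⟨fun x => ⟨hIic x, hIci x, ?_⟩, ?_, hder, ?_⟩
  · rw [hg x, hsplit x]; ring
  · rw [contDiff_one_iff_deriv]
    refine ⟨hdiff, ?_⟩
    rw [hderiv_eq]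
    exact ((continuous_const.div ha_cont ha_ne).mul (continuous_const.sub hh)).sub
      (((continuous_const.mul hb_cont).div ha_cont ha_ne).mul hdiff.continuous)
  · intro x
    rw [(hder x).deriv]
    field_simp [ha_ne x]
    ring
end

section
/- In the Erlang-A setup with abandonment rate α ≥ 0 (where, if α = 0, it is additionally assumed that R < n), let f : ℝ → ℝ satisfy |f(x)| ≤ C(1 + |x|)³ for some C > 0, and set x_k := δ(k − x(∞)) for k ≥ 0. Then the basic adjoint relationship holds: the series Σ_{k≥0} π_k·[λ·(f(x_{k+1}) − f(x_k)) + d(k)·(f(x_{k−1}) − f(x_k))] converges absolutely and equals 0 (the k = 0 term has d(0) = 0). -/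
/-!
Flow balance `λ π_k = d(k+1) π_{k+1}` turns the `k`-th term into the difference `b_{k+1} - b_k`
of `b_k := d(k) π_k (g(k) - g(k-1))`, where `g k = f(x_k)` grows at most cubically in `k` and
`b_0 = 0`. Past some level the departure rate beats the arrival rate by a fixed factor (it grows
linearly when `α > 0`, and equals `nμ > λ` when `α = 0`), so `π` decays geometrically and has
finite polynomial moments. These moments dominate both the terms and `b_k`, so the series
converges absolutely and its partial sums `b_N` tend to `0`.
-/

open Filter Topology

theorem tsum_eq_sub_of_telescoping {G : Type*} [AddCommGroup G] [TopologicalSpace G]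
    [IsTopologicalAddGroup G] [T2Space G] {a b : ℕ → G} {l : G} (ha : Summable a)
    (hab : ∀ k, a k = b (k + 1) - b k) (hb : Tendsto b atTop (𝓝 l)) :
    ∑' k, a k = l - b 0 := by
  have hpartial : (fun N => ∑ k ∈ Finset.range N, a k) = fun N => b N - b 0 := by
    funext N
    simp only [hab]
    exact Finset.sum_range_sub b N
  refine tendsto_nhds_unique ha.hasSum.tendsto_sum_nat ?_
  rw [hpartial]
  exact hb.sub_const _

theorem summable_succ_pow_mul_geometric {r : ℝ} (hr0 : 0 < r) (hr1 : r < 1) (p : ℕ) :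
    Summable fun k : ℕ => ((k : ℝ) + 1) ^ p * r ^ k := by
  have hshift := (summable_nat_add_iff 1).2
    (summable_pow_mul_geometric_of_norm_lt_one p (by rwa [Real.norm_of_nonneg hr0.le]) :
      Summable fun k : ℕ => (k : ℝ) ^ p * r ^ k)
  refine (hshift.mul_left r⁻¹).congr fun k => ?_
  push_cast
  rw [pow_succ]
  field_simp

theorem summable_succ_pow_mul_abs_of_ratio_le {u : ℕ → ℝ} {r : ℝ} (hr0 : 0 < r) (hr1 : r < 1)
    (hu : ∀ᶠ k in atTop, |u (k + 1)| ≤ r * |u k|) (p : ℕ) :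
    Summable fun k : ℕ => ((k : ℝ) + 1) ^ p * |u k| := by
  obtain ⟨m, hm⟩ := eventually_atTop.1 hu
  have hgeom (j : ℕ) : |u (j + m)| ≤ r ^ j * |u m| := by
    simpa using le_geom (u := fun j => |u (j + m)|) hr0.le j fun k _ => by
      simpa only [add_right_comm] using hm (k + m) (Nat.le_add_left m k)
  rw [← summable_nat_add_iff m]
  refine Summable.of_nonneg_of_le (fun j => by positivity) (fun j => ?_)
    ((summable_succ_pow_mul_geometric hr0 hr1 p).mul_left (((m : ℝ) + 1) ^ p * |u m|))
  have hweight : ((j + m : ℕ) : ℝ) + 1 ≤ ((j : ℝ) + 1) * ((m : ℝ) + 1) := by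
    push_cast
    nlinarith [(j.cast_nonneg : (0 : ℝ) ≤ j), (m.cast_nonneg : (0 : ℝ) ≤ m)]
  calc ((j + m : ℕ) + 1 : ℝ) ^ p * |u (j + m)|
      ≤ (((j : ℝ) + 1) * ((m : ℝ) + 1)) ^ p * (r ^ j * |u m|) := by
        gcongr
        exact hgeom j
    _ = ((m : ℝ) + 1) ^ p * |u m| * (((j : ℝ) + 1) ^ p * r ^ j) := by rw [mul_pow]; ring

-- At `k = 0` the truncated `k - 1` is `0`, so the death term vanishes.
def birthDeathGenerator (lam : ℝ) (d g : ℕ → ℝ) (k : ℕ) : ℝ :=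
  lam * (g (k + 1) - g k) + d k * (g (k - 1) - g k)

section BirthDeath

variable {lam c M : ℝ} {d π g : ℕ → ℝ} {p : ℕ}

theorem mul_birthDeathGenerator_eq_sub (hflow : ∀ k, lam * π k = d (k + 1) * π (k + 1))
    (k : ℕ) :
    π k * birthDeathGenerator lam d g k =
      d (k + 1) * π (k + 1) * (g (k + 1) - g k) - d k * π k * (g k - g (k - 1)) := by
  rw [birthDeathGenerator, ← hflow k]
  ring

theorem abs_sub_le_of_le_succ (hg : ∀ k, |g k| ≤ M * ((k : ℝ) + 1) ^ p) {i j k : ℕ}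
    (hi : i ≤ k + 1) (hj : j ≤ k + 1) :
    |g i - g j| ≤ 2 ^ (p + 1) * M * ((k : ℝ) + 1) ^ p := by
  have hM : 0 ≤ M := by simpa using (abs_nonneg _).trans (hg 0)
  have hbound {l : ℕ} (hl : l ≤ k + 1) : |g l| ≤ 2 ^ p * M * ((k : ℝ) + 1) ^ p := by
    have hl' : (l : ℝ) + 1 ≤ 2 * ((k : ℝ) + 1) := by
      have : (l : ℝ) ≤ k + 1 := by exact_mod_cast hl
      linarith
    calc |g l| ≤ M * ((l : ℝ) + 1) ^ p := hg l
      _ ≤ M * (2 * ((k : ℝ) + 1)) ^ p := by gcongr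
      _ = 2 ^ p * M * ((k : ℝ) + 1) ^ p := by rw [mul_pow]; ring
  calc |g i - g j| ≤ |g i| + |g j| := abs_sub _ _
    _ ≤ 2 ^ p * M * ((k : ℝ) + 1) ^ p + 2 ^ p * M * ((k : ℝ) + 1) ^ p :=
        add_le_add (hbound hi) (hbound hj)
    _ = 2 ^ (p + 1) * M * ((k : ℝ) + 1) ^ p := by ring

theorem abs_mul_birthDeathGenerator_le (hd : ∀ k, |d k| ≤ c * ((k : ℝ) + 1))
    (hg : ∀ k, |g k| ≤ M * ((k : ℝ) + 1) ^ p) (k : ℕ) :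
    |π k * birthDeathGenerator lam d g k| ≤
      2 ^ (p + 1) * M * (|lam| + c) * (((k : ℝ) + 1) ^ (p + 1) * |π k|) := by
  set B := 2 ^ (p + 1) * M * ((k : ℝ) + 1) ^ p
  have hB : 0 ≤ B := (abs_nonneg _).trans (abs_sub_le_of_le_succ hg k.le_succ k.le_succ)
  have hc : 0 ≤ c := by simpa using (abs_nonneg _).trans (hd 0)
  have hk : (1 : ℝ) ≤ k + 1 := by linarith [(k.cast_nonneg : (0 : ℝ) ≤ k)]
  have hgen : |birthDeathGenerator lam d g k| ≤ (|lam| + c * ((k : ℝ) + 1)) * B := by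
    calc |birthDeathGenerator lam d g k|
        ≤ |lam| * |g (k + 1) - g k| + |d k| * |g (k - 1) - g k| := by
          rw [birthDeathGenerator, ← abs_mul, ← abs_mul]
          exact abs_add_le _ _
      _ ≤ |lam| * B + c * ((k : ℝ) + 1) * B := by
          gcongr
          · exact abs_sub_le_of_le_succ hg le_rfl k.le_succ
          · exact hd k
          · exact abs_sub_le_of_le_succ hg (k.sub_le 1 |>.trans k.le_succ) k.le_succ
      _ = (|lam| + c * ((k : ℝ) + 1)) * B := by ring
  calc |π k * birthDeathGenerator lam d g k|
      ≤ |π k| * ((|lam| + c * ((k : ℝ) + 1)) * B) := by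
        rw [abs_mul]
        exact mul_le_mul_of_nonneg_left hgen (abs_nonneg _)
    _ ≤ |π k| * ((|lam| + c) * ((k : ℝ) + 1) * B) := by
        gcongr
        nlinarith [abs_nonneg lam]
    _ = 2 ^ (p + 1) * M * (|lam| + c) * (((k : ℝ) + 1) ^ (p + 1) * |π k|) := by ring

theorem abs_flux_le (hd : ∀ k, |d k| ≤ c * ((k : ℝ) + 1))
    (hg : ∀ k, |g k| ≤ M * ((k : ℝ) + 1) ^ p) (k : ℕ) :
    |d k * π k * (g k - g (k - 1))| ≤
      2 ^ (p + 1) * M * (|lam| + c) * (((k : ℝ) + 1) ^ (p + 1) * |π k|) := by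
  have hB := abs_sub_le_of_le_succ hg k.le_succ (k.sub_le 1 |>.trans k.le_succ)
  have hc : c ≤ |lam| + c := le_add_of_nonneg_left (abs_nonneg lam)
  have hdk : 0 ≤ c * ((k : ℝ) + 1) := (abs_nonneg _).trans (hd k)
  have hM : 0 ≤ 2 ^ (p + 1) * M * ((k : ℝ) + 1) ^ p := (abs_nonneg _).trans hB
  calc |d k * π k * (g k - g (k - 1))|
      ≤ c * ((k : ℝ) + 1) * |π k| * (2 ^ (p + 1) * M * ((k : ℝ) + 1) ^ p) := by
        rw [abs_mul, abs_mul]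
        exact mul_le_mul (mul_le_mul_of_nonneg_right (hd k) (abs_nonneg _)) hB
          (abs_nonneg _) (mul_nonneg hdk (abs_nonneg _))
    _ ≤ (|lam| + c) * ((k : ℝ) + 1) * |π k| * (2 ^ (p + 1) * M * ((k : ℝ) + 1) ^ p) := by
        gcongr
    _ = 2 ^ (p + 1) * M * (|lam| + c) * (((k : ℝ) + 1) ^ (p + 1) * |π k|) := by ring

theorem birthDeath_basic_adjoint_relationship (hflow : ∀ k, lam * π k = d (k + 1) * π (k + 1))
    (hd : ∀ k, |d k| ≤ c * ((k : ℝ) + 1)) (hg : ∀ k, |g k| ≤ M * ((k : ℝ) + 1) ^ p)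
    (hπ : Summable fun k : ℕ => ((k : ℝ) + 1) ^ (p + 1) * |π k|) :
    (Summable fun k => |π k * birthDeathGenerator lam d g k|) ∧
      ∑' k, π k * birthDeathGenerator lam d g k = 0 := by
  have hmoment := hπ.mul_left (2 ^ (p + 1) * M * (|lam| + c))
  have hsum : Summable fun k => |π k * birthDeathGenerator lam d g k| :=
    hmoment.of_nonneg_of_le (fun _ => abs_nonneg _) (abs_mul_birthDeathGenerator_le hd hg)
  have hflux : Tendsto (fun k => d k * π k * (g k - g (k - 1))) atTop (𝓝 0) :=
    squeeze_zero_norm (abs_flux_le hd hg) hmoment.tendsto_atTop_zero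
  refine ⟨hsum, ?_⟩
  simpa using tsum_eq_sub_of_telescoping hsum.of_abs (mul_birthDeathGenerator_eq_sub hflow) hflux

theorem eventually_abs_succ_le_of_flow {r : ℝ} (hlam : 0 < lam) (hr : 0 ≤ r)
    (hflow : ∀ k, lam * π k = d (k + 1) * π (k + 1)) (hd : ∀ᶠ k in atTop, lam ≤ r * d k) :
    ∀ᶠ k in atTop, |π (k + 1)| ≤ r * |π k| := by
  filter_upwards [(tendsto_add_atTop_nat 1).eventually hd] with k hk
  have hdpos : 0 < d (k + 1) := by nlinarith
  have hbalance : d (k + 1) * |π (k + 1)| = lam * |π k| := by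
    rw [← abs_of_pos hdpos, ← abs_mul, ← hflow, abs_mul, abs_of_pos hlam]
  refine le_of_mul_le_mul_left ?_ hdpos
  calc d (k + 1) * |π (k + 1)| = lam * |π k| := hbalance
    _ ≤ r * d (k + 1) * |π k| := by gcongr
    _ = d (k + 1) * (r * |π k|) := by ring

end BirthDeath

def erlangDeathRate (mu alpha : ℝ) (n k : ℕ) : ℝ :=
  mu * min (k : ℝ) n + alpha * max ((k : ℝ) - n) 0

section Erlang

variable {lam mu alpha : ℝ} {n : ℕ}

theorem erlangDeathRate_nonneg (hmu : 0 ≤ mu) (halpha : 0 ≤ alpha) (k : ℕ) :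
    0 ≤ erlangDeathRate mu alpha n k := by
  unfold erlangDeathRate
  have : (0 : ℝ) ≤ min (k : ℝ) n := le_min k.cast_nonneg n.cast_nonneg
  positivity

theorem abs_erlangDeathRate_le (hmu : 0 ≤ mu) (halpha : 0 ≤ alpha) (k : ℕ) :
    |erlangDeathRate mu alpha n k| ≤ (mu + alpha) * ((k : ℝ) + 1) := by
  rw [abs_of_nonneg (erlangDeathRate_nonneg hmu halpha k), erlangDeathRate]
  have hmin : min (k : ℝ) n ≤ k + 1 := (min_le_left _ _).trans (by linarith)
  have hmax : max ((k : ℝ) - n) 0 ≤ k + 1 :=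
    max_le (by linarith [(n.cast_nonneg : (0 : ℝ) ≤ n)]) (by positivity)
  calc mu * min (k : ℝ) n + alpha * max ((k : ℝ) - n) 0
      ≤ mu * ((k : ℝ) + 1) + alpha * ((k : ℝ) + 1) := by gcongr
    _ = (mu + alpha) * ((k : ℝ) + 1) := by ring

theorem exists_eventually_le_mul_erlangDeathRate (hlam : 0 < lam) (hmu : 0 < mu)
    (halpha : 0 ≤ alpha) (hload : alpha = 0 → lam < n * mu) :
    ∃ r, 0 < r ∧ r < 1 ∧ ∀ᶠ k in atTop, lam ≤ r * erlangDeathRate mu alpha n k := by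
  rcases halpha.eq_or_lt with rfl | hpos
  · have hlt := hload rfl
    refine ⟨lam / (n * mu), div_pos hlam (by linarith), (div_lt_one (by linarith)).2 hlt, ?_⟩
    filter_upwards [eventually_ge_atTop n] with k hk
    have hnk : (n : ℝ) ≤ k := by exact_mod_cast hk
    rw [erlangDeathRate, min_eq_right hnk, zero_mul, add_zero, mul_comm mu,
      div_mul_cancel₀ _ (by linarith)]
  · have hgrowth : Tendsto (fun k : ℕ => alpha * ((k : ℝ) + -n)) atTop atTop :=
      (tendsto_atTop_add_const_right _ _ tendsto_natCast_atTop_atTop).const_mul_atTop hpos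
    refine ⟨1 / 2, by norm_num, by norm_num, ?_⟩
    filter_upwards [hgrowth.eventually_ge_atTop (2 * lam)] with k hk
    have hmin : 0 ≤ mu * min (k : ℝ) n :=
      mul_nonneg hmu.le (le_min k.cast_nonneg n.cast_nonneg)
    have hmax : alpha * ((k : ℝ) + -n) ≤ alpha * max ((k : ℝ) - n) 0 := by
      gcongr
      exact (sub_eq_add_neg (k : ℝ) n).symm.le.trans (le_max_left _ _)
    rw [erlangDeathRate]
    linarith

end Erlang

theorem abs_comp_affine_le {f : ℝ → ℝ} {C δ x₀ : ℝ} {p : ℕ}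
    (hf : ∀ x, |f x| ≤ C * (1 + |x|) ^ p) (k : ℕ) :
    |f (δ * ((k : ℝ) - x₀))| ≤ C * (1 + |δ| * (1 + |x₀|)) ^ p * ((k : ℝ) + 1) ^ p := by
  have hC : 0 ≤ C := by simpa using (abs_nonneg _).trans (hf 0)
  have hk : (0 : ℝ) ≤ k := k.cast_nonneg
  have hdist : |(k : ℝ) - x₀| ≤ (1 + |x₀|) * ((k : ℝ) + 1) := by
    calc |(k : ℝ) - x₀| ≤ |(k : ℝ)| + |x₀| := abs_sub _ _
      _ ≤ (1 + |x₀|) * ((k : ℝ) + 1) := by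
        rw [abs_of_nonneg hk]
        nlinarith [abs_nonneg x₀]
  have hpoint : 1 + |δ * ((k : ℝ) - x₀)| ≤ (1 + |δ| * (1 + |x₀|)) * ((k : ℝ) + 1) := by
    rw [abs_mul]
    nlinarith [mul_le_mul_of_nonneg_left hdist (abs_nonneg δ)]
  calc |f (δ * ((k : ℝ) - x₀))| ≤ C * (1 + |δ * ((k : ℝ) - x₀)|) ^ p := hf _
    _ ≤ C * ((1 + |δ| * (1 + |x₀|)) * ((k : ℝ) + 1)) ^ p := by gcongr
    _ = C * (1 + |δ| * (1 + |x₀|)) ^ p * ((k : ℝ) + 1) ^ p := by rw [mul_pow]; ring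

theorem erlangA_basic_adjoint_relationship_general
    (lam mu alpha : ℝ) (n : ℕ)
    (hlam : 0 < lam) (hmu : 0 < mu) (halpha : 0 ≤ alpha)
    (R δ xinf : ℝ)
    (hR : R = lam / mu)
    (halpha0 : alpha = 0 → R < (n : ℝ))
    (d : ℕ → ℝ)
    (hd : ∀ k : ℕ, d k = mu * min (k : ℝ) (n : ℝ) + alpha * max ((k : ℝ) - (n : ℝ)) 0)
    (pi : ℕ → ℝ)
    (hflow : ∀ k : ℕ, lam * pi k = d (k + 1) * pi (k + 1))
    (f : ℝ → ℝ) (Cf : ℝ)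
    (hgrowth : ∀ x : ℝ, |f x| ≤ Cf * (1 + |x|) ^ 3)
    (x : ℕ → ℝ) (hx : ∀ k : ℕ, x k = δ * ((k : ℝ) - xinf)) :
    (Summable fun k : ℕ =>
      |pi k * (lam * (f (x (k + 1)) - f (x k)) + d k * (f (x (k - 1)) - f (x k)))|) ∧
    (∑' k : ℕ,
      pi k * (lam * (f (x (k + 1)) - f (x k)) + d k * (f (x (k - 1)) - f (x k)))) = 0 := by
  obtain rfl : d = erlangDeathRate mu alpha n := funext hd
  obtain rfl : x = fun k : ℕ => δ * ((k : ℝ) - xinf) := funext hx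
  have hload (h : alpha = 0) : lam < n * mu := by
    simpa only [hR, div_lt_iff₀ hmu] using halpha0 h
  obtain ⟨r, hr0, hr1, hrate⟩ :=
    exists_eventually_le_mul_erlangDeathRate hlam hmu halpha hload
  have hmoments := summable_succ_pow_mul_abs_of_ratio_le hr0 hr1
    (eventually_abs_succ_le_of_flow hlam hr0.le hflow hrate) 4
  simpa only [birthDeathGenerator] using
    birthDeath_basic_adjoint_relationship hflow (abs_erlangDeathRate_le hmu.le halpha)
      (abs_comp_affine_le (δ := δ) (x₀ := xinf) hgrowth) hmoments

/-- Basic adjoint relationship for the Erlang-A (or Erlang-C when `α = 0`)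
stationary distribution: for any function `f` of at most cubic growth, the
series `Σ π_k·[λ(f(x_{k+1}) − f(x_k)) + d(k)(f(x_{k−1}) − f(x_k))]` converges
absolutely and equals `0`. -/
theorem erlangA_basic_adjoint_relationship
    (lam mu alpha : ℝ) (n : ℕ)
    (hlam : 0 < lam) (hmu : 0 < mu) (halpha : 0 ≤ alpha) (hn : 1 ≤ n)
    (R δ xinf : ℝ)
    (hR : R = lam / mu)
    (halpha0 : alpha = 0 → R < (n : ℝ))
    (hδ : δ = 1 / Real.sqrt R)
    (hxinf : xinf = if 0 < alpha ∧ (n : ℝ) ≤ R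
                    then (n : ℝ) + (lam - (n : ℝ) * mu) / alpha else R)
    (d : ℕ → ℝ)
    (hd : ∀ k : ℕ, d k = mu * min (k : ℝ) (n : ℝ) + alpha * max ((k : ℝ) - (n : ℝ)) 0)
    (pi : ℕ → ℝ)
    (hpi_nonneg : ∀ k, 0 ≤ pi k)
    (hpi_sum : (∑' k : ℕ, pi k) = 1)
    (hflow : ∀ k : ℕ, lam * pi k = d (k + 1) * pi (k + 1))
    (f : ℝ → ℝ) (Cf : ℝ) (hCf : 0 < Cf)
    (hgrowth : ∀ x : ℝ, |f x| ≤ Cf * (1 + |x|) ^ 3)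
    (x : ℕ → ℝ) (hx : ∀ k : ℕ, x k = δ * ((k : ℝ) - xinf)) :
    (Summable fun k : ℕ =>
      |pi k * (lam * (f (x (k + 1)) - f (x k)) + d k * (f (x (k - 1)) - f (x k)))|) ∧
    (∑' k : ℕ,
      pi k * (lam * (f (x (k + 1)) - f (x k)) + d k * (f (x (k - 1)) - f (x k)))) = 0 :=
  erlangA_basic_adjoint_relationship_general lam mu alpha n hlam hmu halpha R δ xinf hR halpha0 d hd
    pi hflow f Cf hgrowth x hx
end

section
/- In the Erlang-C setup with 0 < R < n, fix a ∈ ℝ and define f_a′(x) := e^{−(1/μ)∫₀ˣ b(u) du}·∫_{−∞}^x (1/μ)·(P(Y(∞) ≤ a) − 1_{(−∞,a]}(y))·e^{(1/μ)∫₀ʸ b(u) du} dy. Then f_a′ is continuous and differentiable at every x ≠ a (with a left derivative at x = a), and: |f_a′(x)| ≤ 4/μ for x ≤ −ζ and |f_a′(x)| ≤ 1/(μ|ζ|) for x ≥ −ζ; moreover |f_a″(x)| ≤ 2/μ for all x ∈ ℝ, where f_a″(a) is interpreted as the left derivative of f_a′ at a. -/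
/-!
Let `w(x) = exp(-∫₀ˣ min(y, -ζ) dy)` be the unnormalised stationary density and
`h = (F(a) - 1_{(-∞,a]}) / μ`, so that `f' = w⁻¹ ∫_{-∞}^x h w`; as `h` has mean zero under `w`,
also `f' = -w⁻¹ ∫_x^∞ h w`. The logarithmic derivative of `w` is `-min(x, -ζ)`, which yields the
Mills-type tail bounds `∫_x^∞ w ≤ w(x) / min(x, -ζ)` for `x > 0` and
`∫_{-∞}^x w ≤ w(x) / |x|` for `x < 0`. Hence `|f'(x)| ≤ ‖h‖ / min(x, -ζ)`, resp. `‖h‖ / |x|`,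
and near `0` the Gaussian integral gives `|f'| ≤ 3‖h‖`. Finally `f'' = h + min(x, -ζ) f'`,
and the same bounds give `|min(x, -ζ) f'| ≤ ‖h‖`.
-/

open MeasureTheory Set Filter Topology

namespace ErlangC

theorem setIntegral_Ioi_le_div_of_hasDerivAt {q q' : ℝ → ℝ} {x c : ℝ} (hc : 0 < c)
    (hderiv : ∀ y ∈ Ici x, HasDerivAt q (q' y) y) (hq : ∀ y ∈ Ici x, 0 ≤ q y)
    (hdecay : ∀ y ∈ Ioi x, c * q y ≤ -q' y) :
    ∫ y in Ioi x, q y ≤ q x / c := by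
  have hq'_nonpos : ∀ y ∈ Ioi x, q' y ≤ 0 := fun y hy => by
    nlinarith [hq y (mem_Ici_of_Ioi hy), hdecay y hy]
  have hanti : AntitoneOn q (Ici x) := by
    refine antitoneOn_of_deriv_nonpos (convex_Ici x)
      (fun y hy => (hderiv y hy).continuousAt.continuousWithinAt) (fun y hy => ?_) (fun y hy => ?_)
    · rw [interior_Ici] at hy
      exact (hderiv y (mem_Ici_of_Ioi hy)).differentiableAt.differentiableWithinAt
    · rw [interior_Ici] at hy
      rw [(hderiv y (mem_Ici_of_Ioi hy)).deriv]
      exact hq'_nonpos y hy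
  obtain ⟨l, hl⟩ : ∃ l, Tendsto q atTop (𝓝 l) := by
    have hanti' : Antitone (fun y => q (max x y)) := fun y z hyz =>
      hanti (le_max_left x y) (le_max_left x z) (max_le_max_left x hyz)
    have hbdd : BddBelow (range fun y => q (max x y)) :=
      ⟨0, by rintro _ ⟨y, rfl⟩; exact hq _ (le_max_left x y)⟩
    refine ⟨_, (tendsto_atTop_ciInf hanti' hbdd).congr' ?_⟩
    filter_upwards [eventually_ge_atTop x] with y hy
    rw [max_eq_right hy]
  have hl0 : 0 ≤ l := ge_of_tendsto hl (by
    filter_upwards [eventually_ge_atTop x] with y hy using hq y hy)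
  have hint : IntegrableOn (fun y => -q' y / c) (Ioi x) :=
    (integrableOn_Ioi_deriv_of_nonpos' hderiv hq'_nonpos hl).neg.div_const c
  calc ∫ y in Ioi x, q y ≤ ∫ y in Ioi x, -q' y / c := by
        refine integral_mono_of_nonneg ?_ hint ?_
        · exact ae_restrict_of_forall_mem measurableSet_Ioi fun y hy => hq y (mem_Ici_of_Ioi hy)
        · refine ae_restrict_of_forall_mem measurableSet_Ioi fun y hy => ?_
          rw [le_div_iff₀ hc, mul_comm]
          exact hdecay y hy
    _ = (q x - l) / c := by
        rw [integral_div, integral_neg, integral_Ioi_of_hasDerivAt_of_nonpos' hderiv hq'_nonpos hl,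
          neg_sub]
    _ ≤ q x / c := by gcongr; linarith

theorem setIntegral_Iic_le_div_of_hasDerivAt {q q' : ℝ → ℝ} {x c : ℝ} (hc : 0 < c)
    (hderiv : ∀ y ∈ Iic x, HasDerivAt q (q' y) y) (hq : ∀ y ∈ Iic x, 0 ≤ q y)
    (hgrowth : ∀ y ∈ Iio x, c * q y ≤ q' y) :
    ∫ y in Iic x, q y ≤ q x / c := by
  have h := setIntegral_Ioi_le_div_of_hasDerivAt (q := fun y => q (-y)) (q' := fun y => -q' (-y))
    (x := -x) hc
    (fun y hy => by
      simpa [Function.comp_def] using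
        (hderiv (-y) (neg_le.mp (mem_Ici.mp hy))).scomp y (hasDerivAt_neg y))
    (fun y hy => hq (-y) (neg_le.mp (mem_Ici.mp hy)))
    (fun y hy => by simpa using hgrowth (-y) (neg_lt.mp (mem_Ioi.mp hy)))
  rwa [integral_comp_neg_Ioi, neg_neg] at h

/-- Unnormalised stationary density `exp((1/μ) ∫₀ˣ b)`: the drift is `b y = -μ min y (-ζ)`,
so the factor `μ` cancels. -/
noncomputable def erlangWeight (ζ x : ℝ) : ℝ :=
  Real.exp (-∫ y in (0 : ℝ)..x, min y (-ζ))

variable {ζ x : ℝ}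

theorem erlangWeight_pos : 0 < erlangWeight ζ x := Real.exp_pos _

theorem hasDerivAt_erlangWeight (ζ x : ℝ) :
    HasDerivAt (erlangWeight ζ) (-(min x (-ζ) * erlangWeight ζ x)) x := by
  have hmin : Continuous fun y : ℝ => min y (-ζ) := continuous_id.min continuous_const
  have h := (intervalIntegral.integral_hasDerivAt_right (hmin.intervalIntegrable 0 x)
    (hmin.stronglyMeasurableAtFilter _ _) hmin.continuousAt).neg.exp
  exact h.congr_deriv (by rw [erlangWeight]; simp only [Pi.neg_apply]; ring)

theorem continuous_erlangWeight (ζ : ℝ) : Continuous (erlangWeight ζ) :=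
  continuous_iff_continuousAt.2 fun x => (hasDerivAt_erlangWeight ζ x).continuousAt

theorem erlangWeight_eq_exp_of_le (hζ : ζ ≤ 0) (hx : x ≤ -ζ) :
    erlangWeight ζ x = Real.exp (-(x ^ 2 / 2)) := by
  have hmin : ∀ y ∈ uIcc 0 x, min y (-ζ) = y := fun y hy =>
    min_eq_left (hy.2.trans (max_le (by linarith) hx))
  rw [erlangWeight, intervalIntegral.integral_congr hmin, integral_id]
  ring_nf

theorem setIntegral_Ioi_erlangWeight_le (hx : 0 < min x (-ζ)) :
    ∫ y in Ioi x, erlangWeight ζ y ≤ erlangWeight ζ x / min x (-ζ) :=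
  setIntegral_Ioi_le_div_of_hasDerivAt hx (fun y _ => hasDerivAt_erlangWeight ζ y)
    (fun _ _ => erlangWeight_pos.le) fun y hy => by
      rw [neg_neg]
      exact mul_le_mul_of_nonneg_right (min_le_min_right _ (le_of_lt hy)) erlangWeight_pos.le

theorem setIntegral_Iic_erlangWeight_le (hζ : ζ ≤ 0) (hx : x < 0) :
    ∫ y in Iic x, erlangWeight ζ y ≤ erlangWeight ζ x / -x :=
  setIntegral_Iic_le_div_of_hasDerivAt (neg_pos.2 hx) (fun y _ => hasDerivAt_erlangWeight ζ y)
    (fun _ _ => erlangWeight_pos.le) fun y hy => by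
      rw [min_eq_left (by linarith [mem_Iio.mp hy]), neg_mul_eq_neg_mul]
      exact mul_le_mul_of_nonneg_right (by linarith [mem_Iio.mp hy]) erlangWeight_pos.le

theorem setIntegral_Iic_erlangWeight_le_sqrt (hζ : ζ ≤ 0) (hx : x ≤ -ζ) :
    ∫ y in Iic x, erlangWeight ζ y ≤ √(2 * Real.pi) := by
  have hgauss : Integrable fun y : ℝ => Real.exp (-(1 / 2) * y ^ 2) :=
    integrable_exp_neg_mul_sq (by norm_num)
  calc ∫ y in Iic x, erlangWeight ζ y = ∫ y in Iic x, Real.exp (-(1 / 2) * y ^ 2) :=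
        setIntegral_congr_fun measurableSet_Iic fun y hy => by
          rw [erlangWeight_eq_exp_of_le hζ ((mem_Iic.mp hy).trans hx)]; ring_nf
    _ ≤ ∫ y, Real.exp (-(1 / 2) * y ^ 2) :=
        setIntegral_le_integral hgauss (.of_forall fun _ => (Real.exp_pos _).le)
    _ = √(2 * Real.pi) := by rw [integral_gaussian]; ring_nf

theorem integral_Iic_eq_add_intervalIntegral {f : ℝ → ℝ} (hf : Integrable f) :
    (fun u => ∫ y in Iic u, f y) = fun u => (∫ y in Iic 0, f y) + ∫ y in 0..u, f y := by
  funext u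
  rw [← intervalIntegral.integral_Iic_sub_Iic hf.integrableOn hf.integrableOn, add_sub_cancel]

theorem continuous_integral_Iic {f : ℝ → ℝ} (hf : Integrable f) :
    Continuous fun u => ∫ y in Iic u, f y := by
  rw [integral_Iic_eq_add_intervalIntegral hf]
  exact continuous_const.add (hf.continuous_primitive 0)

theorem hasDerivWithinAt_integral_Iic {f : ℝ → ℝ} (hf : Integrable f)
    (hfx : ContinuousWithinAt f (Iic x) x) :
    HasDerivWithinAt (fun u => ∫ y in Iic u, f y) (f x) (Iic x) x := by
  rw [integral_Iic_eq_add_intervalIntegral hf]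
  exact (intervalIntegral.integral_hasDerivWithinAt_right hf.intervalIntegrable
    hf.aestronglyMeasurable.stronglyMeasurableAtFilter hfx).const_add _

theorem hasDerivAt_integral_Iic {f : ℝ → ℝ} (hf : Integrable f) (hfx : ContinuousAt f x) :
    HasDerivAt (fun u => ∫ y in Iic u, f y) (f x) x := by
  rw [integral_Iic_eq_add_intervalIntegral hf]
  exact (intervalIntegral.integral_hasDerivAt_right hf.intervalIntegrable
    hf.aestronglyMeasurable.stronglyMeasurableAtFilter hfx).const_add _

/-- The derivative `f'` of a solution of the Poisson equation `f'' - β f' = h`, where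
`w' = -β w`. -/
noncomputable def poissonGradient (w h : ℝ → ℝ) (x : ℝ) : ℝ :=
  (w x)⁻¹ * ∫ y in Iic x, h y * w y

section PoissonGradient

variable {w h : ℝ → ℝ} {M : ℝ}

theorem abs_setIntegral_mul_le {s : Set ℝ} (hw : ∀ y, 0 ≤ w y) (hwi : IntegrableOn w s)
    (hM : ∀ y, |h y| ≤ M) : |∫ y in s, h y * w y| ≤ M * ∫ y in s, w y := by
  rw [← integral_const_mul M w, ← Real.norm_eq_abs]
  refine norm_integral_le_of_norm_le (hwi.const_mul M) (.of_forall fun y => ?_)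
  rw [Real.norm_eq_abs, abs_mul, abs_of_nonneg (hw y)]
  exact mul_le_mul_of_nonneg_right (hM y) (hw y)

theorem abs_poissonGradient_le_Iic (hw : ∀ y, 0 < w y) (hwi : Integrable w)
    (hM : ∀ y, |h y| ≤ M) (x : ℝ) :
    |poissonGradient w h x| ≤ M * (∫ y in Iic x, w y) / w x := by
  rw [poissonGradient, abs_mul, abs_inv, abs_of_pos (hw x), inv_mul_eq_div]
  exact div_le_div_of_nonneg_right
    (abs_setIntegral_mul_le (fun y => (hw y).le) hwi.integrableOn hM) (hw x).le

theorem abs_poissonGradient_le_Ioi (hw : ∀ y, 0 < w y) (hwi : Integrable w)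
    (hM : ∀ y, |h y| ≤ M) (hhw : Integrable fun y => h y * w y)
    (h0 : ∫ y, h y * w y = 0) (x : ℝ) :
    |poissonGradient w h x| ≤ M * (∫ y in Ioi x, w y) / w x := by
  have hsplit := intervalIntegral.integral_Iic_add_Ioi (b := x) hhw.integrableOn hhw.integrableOn
  rw [h0, add_eq_zero_iff_eq_neg] at hsplit
  rw [poissonGradient, hsplit, abs_mul, abs_neg, abs_inv, abs_of_pos (hw x), inv_mul_eq_div]
  exact div_le_div_of_nonneg_right
    (abs_setIntegral_mul_le (fun y => (hw y).le) hwi.integrableOn hM) (hw x).le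

theorem continuous_poissonGradient (hw : Continuous w) (hw0 : ∀ y, w y ≠ 0)
    (hhw : Integrable fun y => h y * w y) : Continuous (poissonGradient w h) :=
  (hw.inv₀ hw0).mul (continuous_integral_Iic hhw)

theorem hasDerivWithinAt_poissonGradient {β : ℝ} {s : Set ℝ}
    (hw : HasDerivAt w (-(β * w x)) x) (hwx : w x ≠ 0)
    (hg : HasDerivWithinAt (fun u => ∫ y in Iic u, h y * w y) (h x * w x) s x) :
    HasDerivWithinAt (poissonGradient w h) (h x + β * poissonGradient w h x) s x := by
  refine ((hw.inv hwx).hasDerivWithinAt.mul hg).congr_deriv ?_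
  simp only [poissonGradient, Pi.inv_apply]
  field_simp
  ring

end PoissonGradient

section ErlangBounds

variable {h : ℝ → ℝ} {M : ℝ}

theorem abs_poissonGradient_erlangWeight_le_of_pos (hζ : ζ < 0)
    (hwi : Integrable (erlangWeight ζ)) (hM : ∀ y, |h y| ≤ M)
    (hhw : Integrable fun y => h y * erlangWeight ζ y) (h0 : ∫ y, h y * erlangWeight ζ y = 0)
    (hx : 0 < x) :
    |poissonGradient (erlangWeight ζ) h x| ≤ M / min x (-ζ) := by
  have hmin : 0 < min x (-ζ) := lt_min hx (neg_pos.2 hζ)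
  have hM0 : 0 ≤ M := (abs_nonneg _).trans (hM 0)
  calc |poissonGradient (erlangWeight ζ) h x|
      ≤ M * (∫ y in Ioi x, erlangWeight ζ y) / erlangWeight ζ x :=
        abs_poissonGradient_le_Ioi (fun _ => erlangWeight_pos) hwi hM hhw h0 x
    _ ≤ M * (erlangWeight ζ x / min x (-ζ)) / erlangWeight ζ x := by
        refine div_le_div_of_nonneg_right ?_ erlangWeight_pos.le
        exact mul_le_mul_of_nonneg_left (setIntegral_Ioi_erlangWeight_le hmin) hM0
    _ = M / min x (-ζ) := by field_simp [erlangWeight_pos.ne']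

theorem abs_poissonGradient_erlangWeight_le_of_neg (hζ : ζ ≤ 0)
    (hwi : Integrable (erlangWeight ζ)) (hM : ∀ y, |h y| ≤ M) (hx : x < 0) :
    |poissonGradient (erlangWeight ζ) h x| ≤ M / -x := by
  have hM0 : 0 ≤ M := (abs_nonneg _).trans (hM 0)
  calc |poissonGradient (erlangWeight ζ) h x|
      ≤ M * (∫ y in Iic x, erlangWeight ζ y) / erlangWeight ζ x :=
        abs_poissonGradient_le_Iic (fun _ => erlangWeight_pos) hwi hM x
    _ ≤ M * (erlangWeight ζ x / -x) / erlangWeight ζ x := by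
        refine div_le_div_of_nonneg_right ?_ erlangWeight_pos.le
        exact mul_le_mul_of_nonneg_left (setIntegral_Iic_erlangWeight_le hζ hx) hM0
    _ = M / -x := by field_simp [erlangWeight_pos.ne']

theorem abs_poissonGradient_erlangWeight_le_of_abs_le (hζ : ζ ≤ 0)
    (hwi : Integrable (erlangWeight ζ)) (hM : ∀ y, |h y| ≤ M) (hxζ : x ≤ -ζ)
    (hx : |x| ≤ 1 / 2) :
    |poissonGradient (erlangWeight ζ) h x| ≤ 3 * M := by
  have hM0 : 0 ≤ M := (abs_nonneg _).trans (hM 0)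
  have hw : 7 / 8 ≤ erlangWeight ζ x := by
    rw [erlangWeight_eq_exp_of_le hζ hxζ]
    nlinarith [Real.add_one_le_exp (-(x ^ 2 / 2)), sq_abs x, abs_nonneg x]
  have hsqrt : √(2 * Real.pi) ≤ 13 / 5 := by
    rw [Real.sqrt_le_left (by norm_num)]
    nlinarith [Real.pi_lt_d2]
  calc |poissonGradient (erlangWeight ζ) h x|
      ≤ M * (∫ y in Iic x, erlangWeight ζ y) / erlangWeight ζ x :=
        abs_poissonGradient_le_Iic (fun _ => erlangWeight_pos) hwi hM x
    _ ≤ M * (13 / 5) / (7 / 8) := by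
        refine div_le_div₀ (by positivity) (mul_le_mul_of_nonneg_left ?_ hM0) (by norm_num) hw
        exact (setIntegral_Iic_erlangWeight_le_sqrt hζ hxζ).trans hsqrt
    _ ≤ 3 * M := by linarith

theorem abs_min_mul_poissonGradient_erlangWeight_le (hζ : ζ < 0)
    (hwi : Integrable (erlangWeight ζ)) (hM : ∀ y, |h y| ≤ M)
    (hhw : Integrable fun y => h y * erlangWeight ζ y) (h0 : ∫ y, h y * erlangWeight ζ y = 0)
    (x : ℝ) : |min x (-ζ) * poissonGradient (erlangWeight ζ) h x| ≤ M := by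
  rw [abs_mul]
  rcases lt_trichotomy x 0 with hx | rfl | hx
  · have hG := abs_poissonGradient_erlangWeight_le_of_neg hζ.le hwi hM hx
    rw [min_eq_left (by linarith), abs_of_neg hx]
    calc -x * |poissonGradient (erlangWeight ζ) h x| ≤ -x * (M / -x) := by gcongr; linarith
      _ = M := by field_simp [hx.ne]
  · simpa [min_eq_left (neg_pos.2 hζ).le] using (abs_nonneg _).trans (hM 0)
  · have hmin : 0 < min x (-ζ) := lt_min hx (neg_pos.2 hζ)
    have hG := abs_poissonGradient_erlangWeight_le_of_pos hζ hwi hM hhw h0 hx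
    rw [abs_of_pos hmin]
    calc min x (-ζ) * |poissonGradient (erlangWeight ζ) h x|
        ≤ min x (-ζ) * (M / min x (-ζ)) := by gcongr
      _ = M := by field_simp

theorem abs_poissonGradient_erlangWeight_le_of_le_neg (hζ : ζ < 0)
    (hwi : Integrable (erlangWeight ζ)) (hM : ∀ y, |h y| ≤ M)
    (hhw : Integrable fun y => h y * erlangWeight ζ y) (h0 : ∫ y, h y * erlangWeight ζ y = 0)
    (hx : x ≤ -ζ) : |poissonGradient (erlangWeight ζ) h x| ≤ 4 * M := by
  have hM0 : 0 ≤ M := (abs_nonneg _).trans (hM 0)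
  rcases le_or_gt x (-(1 / 2)) with hneg | hmid
  · calc _ ≤ M / -x := abs_poissonGradient_erlangWeight_le_of_neg hζ.le hwi hM (by linarith)
      _ ≤ M / (1 / 2) := by gcongr; linarith
      _ ≤ 4 * M := by linarith
  rcases le_or_gt (1 / 2) x with hpos | hsmall
  · calc _ ≤ M / min x (-ζ) :=
          abs_poissonGradient_erlangWeight_le_of_pos hζ hwi hM hhw h0 (by linarith)
      _ = M / x := by rw [min_eq_left hx]
      _ ≤ M / (1 / 2) := by gcongr
      _ ≤ 4 * M := by linarith
  · calc _ ≤ 3 * M := abs_poissonGradient_erlangWeight_le_of_abs_le hζ.le hwi hM hx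
          (abs_le.2 ⟨hmid.le, hsmall.le⟩)
      _ ≤ 4 * M := by linarith

theorem exists_hasDerivWithinAt_poissonGradient_erlangWeight (hζ : ζ < 0)
    (hwi : Integrable (erlangWeight ζ)) (hM : ∀ y, |h y| ≤ M)
    (hhw : Integrable fun y => h y * erlangWeight ζ y) (h0 : ∫ y, h y * erlangWeight ζ y = 0)
    (hx : ContinuousWithinAt h (Iic x) x) :
    ∃ L, HasDerivWithinAt (poissonGradient (erlangWeight ζ) h) L (Iic x) x ∧ |L| ≤ 2 * M ∧
      (ContinuousAt h x → HasDerivAt (poissonGradient (erlangWeight ζ) h) L x) := by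
  have hw := hasDerivAt_erlangWeight ζ x
  refine ⟨_, hasDerivWithinAt_poissonGradient hw erlangWeight_pos.ne'
    (hasDerivWithinAt_integral_Iic hhw (hx.mul (continuous_erlangWeight ζ).continuousWithinAt)),
    ?_, fun hxc => ?_⟩
  · calc _ ≤ |h x| + |min x (-ζ) * poissonGradient (erlangWeight ζ) h x| := abs_add_le _ _
      _ ≤ M + M := add_le_add (hM x)
          (abs_min_mul_poissonGradient_erlangWeight_le hζ hwi hM hhw h0 x)
      _ = 2 * M := by ring
  · exact hasDerivWithinAt_univ.mp (hasDerivWithinAt_poissonGradient hw erlangWeight_pos.ne'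
      (hasDerivAt_integral_Iic hhw
        (hxc.mul (continuous_erlangWeight ζ).continuousAt)).hasDerivWithinAt)

end ErlangBounds

theorem continuousWithinAt_Iic_ite_le {α : Type*} [TopologicalSpace α] (c d : α) (a x : ℝ) :
    ContinuousWithinAt (fun y : ℝ => if y ≤ a then c else d) (Iic x) x := by
  rcases le_or_gt x a with hxa | hax
  · refine continuousWithinAt_const.congr (fun y hy => if_pos ((mem_Iic.1 hy).trans hxa))
      (if_pos hxa)
  · refine ((continuousAt_const : ContinuousAt (fun _ : ℝ => d) x).congr ?_).continuousWithinAt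
    filter_upwards [Ioi_mem_nhds hax] with y hy using (if_neg (not_le.2 hy)).symm

theorem continuousAt_ite_le {α : Type*} [TopologicalSpace α] (c d : α) {a x : ℝ} (hx : x ≠ a) :
    ContinuousAt (fun y : ℝ => if y ≤ a then c else d) x := by
  rcases hx.lt_or_gt with hxa | hax
  · refine (continuousAt_const : ContinuousAt (fun _ : ℝ => c) x).congr ?_
    filter_upwards [Iio_mem_nhds hxa] with y hy using (if_pos hy.le).symm
  · refine (continuousAt_const : ContinuousAt (fun _ : ℝ => d) x).congr ?_
    filter_upwards [Ioi_mem_nhds hax] with y hy using (if_neg (not_le.2 hy)).symm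

theorem abs_mul_sub_ite_le {c F a y : ℝ} (hc : 0 ≤ c) (hF : F ∈ Icc 0 1) :
    |c * (F - if y ≤ a then 1 else 0)| ≤ c := by
  rw [abs_mul, abs_of_nonneg hc]
  refine mul_le_of_le_one_right hc (abs_le.2 ⟨?_, ?_⟩) <;> split_ifs <;> linarith [hF.1, hF.2]

theorem integral_mul_sub_ite_le_mul_eq_zero {w : ℝ → ℝ} (hwi : Integrable w) {F a : ℝ}
    (hF : F * ∫ y, w y = ∫ y in Iic a, w y) (c : ℝ) :
    ∫ y, c * (F - if y ≤ a then 1 else 0) * w y = 0 := by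
  have hind : (fun y => (if y ≤ a then (1 : ℝ) else 0) * w y) = (Iic a).indicator w := by
    funext y
    by_cases hy : y ≤ a <;> simp [hy]
  simp_rw [mul_assoc, sub_mul]
  rw [integral_const_mul, integral_sub (hwi.const_mul F)
    (by rw [hind]; exact hwi.indicator measurableSet_Iic), hind, integral_const_mul,
    integral_indicator measurableSet_Iic, hF, sub_self, mul_zero]

theorem integrable_of_integral_const_mul_eq_one {w : ℝ → ℝ} {κ : ℝ} (hκ : κ ≠ 0)
    (h : ∫ y, κ * w y = 1) : Integrable w := by
  refine ((Integrable.of_integral_ne_zero (h ▸ one_ne_zero)).const_mul κ⁻¹).congr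
    (.of_forall fun y => ?_)
  simp only [inv_mul_cancel_left₀ hκ]

theorem setIntegral_mem_Icc_of_integral_eq_one {f : ℝ → ℝ} (hf : ∀ y, 0 ≤ f y)
    (h : ∫ y, f y = 1) (s : Set ℝ) (hs : MeasurableSet s) : ∫ y in s, f y ∈ Icc 0 1 :=
  ⟨setIntegral_nonneg hs fun y _ => hf y, h ▸ setIntegral_le_integral
    (Integrable.of_integral_ne_zero (h ▸ one_ne_zero)) (.of_forall hf)⟩

theorem ite_le_neg_eq_neg_mul_min (mu ζ x : ℝ) :
    (if x ≤ -ζ then -(mu * x) else mu * ζ) = -(mu * min x (-ζ)) := by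
  split_ifs with hx
  · rw [min_eq_left hx]
  · rw [min_eq_right (by linarith)]; ring

theorem exp_integral_neg_mul_min_eq_erlangWeight {mu : ℝ} (hmu : 0 < mu) (ζ x : ℝ) :
    Real.exp ((1 / mu) * ∫ y in (0 : ℝ)..x, -(mu * min y (-ζ))) = erlangWeight ζ x := by
  rw [erlangWeight, intervalIntegral.integral_neg, intervalIntegral.integral_const_mul]
  field_simp

end ErlangC

open ErlangC

theorem erlangC_kolmogorov_gradient_bounds_general
    (mu : ℝ) (n : ℕ)
    (hmu : 0 < mu)
    (R δ ζ : ℝ)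
    (hR0 : 0 < R) (hRn : R < (n : ℝ))
    (hδ : δ = 1 / Real.sqrt R) (hζ : ζ = δ * (R - (n : ℝ)))
    (b : ℝ → ℝ)
    (hb : ∀ x : ℝ, b x = if x ≤ -ζ then -(mu * x) else mu * ζ)
    (p : ℝ → ℝ)
    (hp : ∀ x : ℝ, p x = Real.exp ((1 / mu) * ∫ y in (0:ℝ)..x, b y))
    (kappa : ℝ) (hkappa : 0 < kappa)
    (nu : ℝ → ℝ) (hnu : ∀ x : ℝ, nu x = kappa * p x)
    (hnu_norm : (∫ x : ℝ, nu x) = 1)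
    (a : ℝ)
    (Fa : ℝ) (hFa : Fa = ∫ x in Set.Iic a, nu x)
    (f' : ℝ → ℝ)
    (hf' : ∀ x : ℝ, f' x = (p x)⁻¹ *
      ∫ y in Set.Iic x, (1 / mu) * (Fa - if y ≤ a then 1 else 0) * p y) :
    Continuous f' ∧
    (∀ x : ℝ, x ≤ -ζ → |f' x| ≤ 4 / mu) ∧
    (∀ x : ℝ, -ζ ≤ x → |f' x| ≤ 1 / (mu * |ζ|)) ∧
    (∀ x : ℝ, ∃ L : ℝ,
      HasDerivWithinAt f' L (Set.Iic x) x ∧ |L| ≤ 2 / mu ∧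
      (x ≠ a → HasDerivAt f' L x)) := by
  have hζneg : ζ < 0 := by
    rw [hζ, hδ]
    exact mul_neg_of_pos_of_neg (by positivity) (by linarith)
  obtain rfl : p = erlangWeight ζ := funext fun x => by
    simp_rw [hp, hb, ite_le_neg_eq_neg_mul_min, exp_integral_neg_mul_min_eq_erlangWeight hmu]
  simp only [hnu] at hnu_norm hFa
  have hwi : Integrable (erlangWeight ζ) :=
    integrable_of_integral_const_mul_eq_one hkappa.ne' hnu_norm
  have hFa01 : Fa ∈ Icc 0 1 := hFa ▸ setIntegral_mem_Icc_of_integral_eq_one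
    (fun _ => mul_nonneg hkappa.le erlangWeight_pos.le) hnu_norm _ measurableSet_Iic
  have hFa_mul : Fa * ∫ y, erlangWeight ζ y = ∫ y in Iic a, erlangWeight ζ y := by
    rw [integral_const_mul] at hnu_norm hFa
    rw [hFa]
    linear_combination (∫ y in Iic a, erlangWeight ζ y) * hnu_norm
  set h : ℝ → ℝ := fun y => 1 / mu * (Fa - if y ≤ a then 1 else 0)
  have hM : ∀ y, |h y| ≤ 1 / mu := fun y => abs_mul_sub_ite_le (by positivity) hFa01
  have hhw : Integrable fun y => h y * erlangWeight ζ y :=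
    hwi.bdd_mul (measurable_const.mul (measurable_const.sub
      (measurable_const.ite measurableSet_Iic measurable_const))).aestronglyMeasurable
      (.of_forall hM)
  have h0 : ∫ y, h y * erlangWeight ζ y = 0 := integral_mul_sub_ite_le_mul_eq_zero hwi hFa_mul _
  obtain rfl : f' = poissonGradient (erlangWeight ζ) h := funext hf'
  refine ⟨continuous_poissonGradient (continuous_erlangWeight ζ) (fun _ => erlangWeight_pos.ne')
    hhw, fun x hx => ?_, fun x hx => ?_, fun x => ?_⟩
  · exact (abs_poissonGradient_erlangWeight_le_of_le_neg hζneg hwi hM hhw h0 hx).trans_eq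
      (by ring)
  · have hG := abs_poissonGradient_erlangWeight_le_of_pos hζneg hwi hM hhw h0 (by linarith)
    rwa [min_eq_right hx, div_div, ← abs_of_neg hζneg] at hG
  · obtain ⟨L, hL, hLM, hLa⟩ := exists_hasDerivWithinAt_poissonGradient_erlangWeight hζneg hwi hM
      hhw h0 (continuousWithinAt_const.mul
        (continuousWithinAt_const.sub (continuousWithinAt_Iic_ite_le 1 0 a x)))
    exact ⟨L, hL, hLM.trans_eq (by ring), fun hxa => hLa (continuousAt_const.mul
      (continuousAt_const.sub (continuousAt_ite_le 1 0 hxa)))⟩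

/-- Kolmogorov gradient bounds for the Erlang-C model: the derivative `f_a′` of
the solution of the Poisson equation for the test function `1_{(-∞,a]}` is
continuous, differentiable away from `a` (with a left derivative everywhere),
and satisfies explicit first- and second-derivative bounds. -/
theorem erlangC_kolmogorov_gradient_bounds
    (lam mu : ℝ) (n : ℕ)
    (hlam : 0 < lam) (hmu : 0 < mu) (hn : 1 ≤ n)
    (R δ ζ : ℝ)
    (hR : R = lam / mu) (hR0 : 0 < R) (hRn : R < (n : ℝ))
    (hδ : δ = 1 / Real.sqrt R) (hζ : ζ = δ * (R - (n : ℝ)))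
    (b : ℝ → ℝ)
    (hb : ∀ x : ℝ, b x = if x ≤ -ζ then -(mu * x) else mu * ζ)
    (p : ℝ → ℝ)
    (hp : ∀ x : ℝ, p x = Real.exp ((1 / mu) * ∫ y in (0:ℝ)..x, b y))
    (kappa : ℝ) (hkappa : 0 < kappa)
    (nu : ℝ → ℝ) (hnu : ∀ x : ℝ, nu x = kappa * p x)
    (hnu_norm : (∫ x : ℝ, nu x) = 1)
    (a : ℝ)
    (Fa : ℝ) (hFa : Fa = ∫ x in Set.Iic a, nu x)
    (f' : ℝ → ℝ)
    (hf' : ∀ x : ℝ, f' x = (p x)⁻¹ *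
      ∫ y in Set.Iic x, (1 / mu) * (Fa - if y ≤ a then 1 else 0) * p y) :
    Continuous f' ∧
    (∀ x : ℝ, x ≤ -ζ → |f' x| ≤ 4 / mu) ∧
    (∀ x : ℝ, -ζ ≤ x → |f' x| ≤ 1 / (mu * |ζ|)) ∧
    (∀ x : ℝ, ∃ L : ℝ,
      HasDerivWithinAt f' L (Set.Iic x) x ∧ |L| ≤ 2 / mu ∧
      (x ≠ a → HasDerivAt f' L x)) :=
  erlangC_kolmogorov_gradient_bounds_general mu n hmu R δ ζ hR0 hRn hδ hζ b hb p hp kappa hkappa nu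
    hnu hnu_norm a Fa hFa f' hf'
end

section
/- In the Erlang-C setup with 0 < R < n, let W be any real random variable with cumulative distribution function F_W, and let ω(F_W) := sup_{x ≠ y} |F_W(x) − F_W(y)|/|x − y| be its Lipschitz modulus. Then for every a ∈ ℝ, P(a − δ < X̃(∞) ≤ a + δ) ≤ 2δ·ω(F_W) + d_K(X̃(∞), W) + 9δ² + 8δ⁴. -/
open MeasureTheory Set

/-!
The atoms of `X̃(∞)` sit on the lattice `δ (ℕ - R)` of mesh `δ`, so `(a - δ, a + δ]` carries
at most two consecutive atoms `π m, π (m + 1)`, while a window of four consecutive atoms is the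
increment of the cdf of `X̃(∞)` over an interval of length `4δ`, hence at most
`4δ ω(F_W) + 2 d_K`. Flow balance makes `π` nonincreasing beyond `R` and gives
`R² π k ≤ (k + 1) (k + 2) π (k + 2)`; so the pair carries at most half of a four-atom window
(the one starting two atoms earlier beyond the mode, its own otherwise), up to an error
`5 / R = 5 δ²`.
-/

noncomputable def atomicCDF (x p : ℕ → ℝ) (t : ℝ) : ℝ := ∑' k, if x k ≤ t then p k else 0

section AtomicCDF

variable {x p : ℕ → ℝ}

lemma Summable.ite_zero (hp : Summable p) (q : ℕ → Prop) [DecidablePred q] :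
    Summable fun k => if q k then p k else 0 :=
  (hp.indicator {k | q k}).congr fun k => by simp [Set.indicator_apply]

lemma tsum_ite_Ioc_eq_atomicCDF_sub (hp : Summable p) {t₀ t₁ : ℝ} (h : t₀ ≤ t₁) :
    (∑' k, if t₀ < x k ∧ x k ≤ t₁ then p k else 0) = atomicCDF x p t₁ - atomicCDF x p t₀ := by
  rw [atomicCDF, atomicCDF, ← (hp.ite_zero _).tsum_sub (hp.ite_zero _)]
  refine tsum_congr fun k => ?_
  split_ifs <;> grind

lemma tsum_ite_Ioc_le {F : ℝ → ℝ} {ω d : ℝ} (hp : Summable p)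
    (hF : ∀ s t, |F s - F t| ≤ ω * |s - t|) (hd : ∀ t, |atomicCDF x p t - F t| ≤ d)
    {t₀ t₁ : ℝ} (h : t₀ ≤ t₁) :
    (∑' k, if t₀ < x k ∧ x k ≤ t₁ then p k else 0) ≤ ω * (t₁ - t₀) + 2 * d := by
  have h₁ := (abs_le.mp (hd t₁)).2
  have h₀ := (abs_le.mp (hd t₀)).1
  have hF₁₀ := (le_abs_self _).trans (hF t₁ t₀)
  rw [abs_of_nonneg (sub_nonneg.mpr h)] at hF₁₀
  rw [tsum_ite_Ioc_eq_atomicCDF_sub hp h]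
  linarith

end AtomicCDF

section Lattice

variable {δ R : ℝ} {p : ℕ → ℝ}

lemma Nat.cast_sub_one_lt_cast_iff {j k : ℕ} : (j : ℝ) - 1 < k ↔ j ≤ k := by
  rw [sub_lt_iff_lt_add]
  exact_mod_cast Nat.lt_succ_iff

lemma tsum_ite_lattice_window (hδ : 0 < δ) (b : ℕ) :
    (∑' k : ℕ, if δ * ((b : ℝ) - 1 - R) < δ * (k - R) ∧ δ * (k - R) ≤ δ * ((b : ℝ) + 3 - R)
      then p k else 0) = p b + p (b + 1) + p (b + 2) + p (b + 3) := by
  have hmem : ∀ k : ℕ, (δ * ((b : ℝ) - 1 - R) < δ * (k - R) ∧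
      δ * (k - R) ≤ δ * ((b : ℝ) + 3 - R)) ↔ k ∈ Finset.Ico b (b + 4) := fun k => by
    rw [mul_lt_mul_iff_right₀ hδ, mul_le_mul_iff_right₀ hδ, sub_lt_sub_iff_right,
      sub_le_sub_iff_right, Nat.cast_sub_one_lt_cast_iff, Finset.mem_Ico]
    refine and_congr_right' ⟨fun h => ?_, fun h => ?_⟩
    · have : k ≤ b + 3 := by exact_mod_cast h
      omega
    · exact_mod_cast (by omega : k ≤ b + 3)
  rw [tsum_congr fun k => if_congr (hmem k) rfl rfl, tsum_eq_sum fun k hk => if_neg hk,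
    Finset.sum_congr rfl fun k hk => if_pos hk, Finset.sum_Ico_eq_sum_range]
  simp only [Nat.add_sub_cancel_left, Finset.sum_range_succ, Finset.sum_range_zero]
  ring_nf

lemma exists_tsum_ite_lattice_Ioc_le_add_succ (hδ : 0 < δ) (hp : ∀ k, 0 ≤ p k) (a : ℝ) :
    ∃ m : ℕ, (∑' k : ℕ, if a - δ < δ * (k - R) ∧ δ * (k - R) ≤ a + δ then p k else 0) ≤
      p m + p (m + 1) := by
  set m := ⌊a / δ + R⌋₊
  refine ⟨m, ?_⟩
  have hmem : ∀ k : ℕ, a - δ < δ * (k - R) ∧ δ * (k - R) ≤ a + δ →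
      k ∈ ({m, m + 1} : Finset ℕ) := by
    rintro k ⟨hlo, hhi⟩
    have hlo' : a / δ + R < k + 1 := by
      rw [div_add' _ _ _ hδ.ne', div_lt_iff₀ hδ]; linarith
    have hhi' : (k : ℝ) ≤ a / δ + R + 1 := by
      rw [div_add' _ _ _ hδ.ne', div_add' _ _ _ hδ.ne', le_div_iff₀ hδ]; linarith
    have hmk : m < k + 1 := (Nat.floor_lt' k.succ_ne_zero).2 (by exact_mod_cast hlo')
    have hkm : k < m + 2 := by
      have := Nat.lt_floor_add_one (a / δ + R)
      exact_mod_cast (show (k : ℝ) < m + 2 by linarith)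
    simp only [Finset.mem_insert, Finset.mem_singleton]
    omega
  rw [tsum_eq_sum (s := {m, m + 1}) fun k hk => if_neg (mt (hmem k) hk),
    Finset.sum_pair (by omega)]
  gcongr <;> split_ifs <;> simp [hp]

end Lattice

section FlowBalance

variable {R : ℝ} {n : ℕ} {p : ℕ → ℝ}

lemma mul_le_succ_mul_succ_of_flow (hflow : ∀ k : ℕ, R * p k = min ((k : ℝ) + 1) n * p (k + 1))
    (hp : ∀ k, 0 ≤ p k) (k : ℕ) : R * p k ≤ (k + 1) * p (k + 1) := by
  rw [hflow]
  exact mul_le_mul_of_nonneg_right (min_le_left _ _) (hp _)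

lemma succ_le_of_flow (hflow : ∀ k : ℕ, R * p k = min ((k : ℝ) + 1) n * p (k + 1))
    (hp : ∀ k, 0 ≤ p k) (hR : 0 < R) (hRn : R ≤ n) {k : ℕ} (hk : R ≤ k + 1) :
    p (k + 1) ≤ p k := by
  refine le_of_mul_le_mul_left ?_ hR
  calc R * p (k + 1) ≤ min ((k : ℝ) + 1) n * p (k + 1) :=
        mul_le_mul_of_nonneg_right (le_min hk hRn) (hp _)
    _ = R * p k := (hflow k).symm

lemma sq_mul_le_of_flow (hflow : ∀ k : ℕ, R * p k = min ((k : ℝ) + 1) n * p (k + 1))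
    (hp : ∀ k, 0 ≤ p k) (hR : 0 ≤ R) {k : ℕ} (hk : (k : ℝ) ≤ R + 3) :
    R ^ 2 * p k ≤ (R + 5) ^ 2 * p (k + 2) := by
  have h₀ := mul_le_succ_mul_succ_of_flow hflow hp k
  have h₁ := mul_le_succ_mul_succ_of_flow hflow hp (k + 1)
  push_cast at h₁
  calc R ^ 2 * p k = R * (R * p k) := by ring
    _ ≤ R * ((k + 1) * p (k + 1)) := by gcongr
    _ = (k + 1) * (R * p (k + 1)) := by ring
    _ ≤ (k + 1) * ((k + 1 + 1) * p (k + 2)) := by gcongr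
    _ ≤ (R + 5) ^ 2 * p (k + 2) := by
      rw [← mul_assoc]
      gcongr
      · exact hp _
      · nlinarith

lemma le_half_add_of_sq_mul_le {R u v w : ℝ} (hR : 0 < R) (hu : u ≤ 1) (huv : u + v ≤ w)
    (h : R ^ 2 * u ≤ (R + 5) ^ 2 * v) : u ≤ w / 2 + 5 / R := by
  have h₁ : (R + 5) ^ 2 * (2 * u - w) ≤ 10 * R + 25 := by nlinarith
  have h₂ : R * (R + 5) ^ 2 * (2 * u - w) ≤ 10 * (R + 5) ^ 2 := by nlinarith
  rw [div_add_div _ _ two_ne_zero hR.ne', le_div_iff₀ (by positivity)]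
  nlinarith [sq_nonneg (R + 5)]

lemma add_succ_le_half_of_window_le (hflow : ∀ k : ℕ, R * p k = min ((k : ℝ) + 1) n * p (k + 1))
    (hp : ∀ k, 0 ≤ p k) (hR : 0 < R) (hRn : R ≤ n) {B : ℝ}
    (hB : ∀ b, p b + p (b + 1) + p (b + 2) + p (b + 3) ≤ B) {m : ℕ} (hm : p m + p (m + 1) ≤ 1) :
    p m + p (m + 1) ≤ B / 2 + 5 / R := by
  rcases le_or_gt (m : ℝ) (R + 2) with hmR | hmR
  · refine le_half_add_of_sq_mul_le hR hm ((add_assoc _ _ _).symm.le.trans (hB m)) ?_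
    have h₀ := sq_mul_le_of_flow hflow hp hR.le (k := m) (by linarith)
    have h₁ : R ^ 2 * p (m + 1) ≤ (R + 5) ^ 2 * p (m + 3) :=
      sq_mul_le_of_flow hflow hp hR.le (by push_cast; linarith)
    linarith
  · obtain ⟨b, rfl⟩ : ∃ b, m = b + 2 := ⟨m - 2, by
      have : (2 : ℝ) < m := by linarith
      have : 2 < m := by exact_mod_cast this
      omega⟩
    push_cast at hmR
    have d₀ : p (b + 1) ≤ p b := succ_le_of_flow hflow hp hR hRn (by linarith)
    have d₁ : p (b + 2) ≤ p (b + 1) := succ_le_of_flow hflow hp hR hRn (by push_cast; linarith)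
    have d₂ : p (b + 3) ≤ p (b + 2) := succ_le_of_flow hflow hp hR hRn (by push_cast; linarith)
    have := hB b
    have : 0 < 5 / R := by positivity
    show p (b + 2) + p (b + 3) ≤ _
    linarith

end FlowBalance

theorem erlangC_point_mass_bound_general
    (lam mu : ℝ) (n : ℕ)
    (hmu : 0 < mu)
    (R δ : ℝ)
    (hR : R = lam / mu) (hR0 : 0 < R) (hRn : R < (n : ℝ))
    (hδ : δ = 1 / Real.sqrt R)
    (pi : ℕ → ℝ)
    (hpi_nonneg : ∀ k, 0 ≤ pi k)
    (hpi_sum : (∑' k : ℕ, pi k) = 1)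
    (hflow : ∀ k : ℕ, lam * pi k = mu * min ((k : ℝ) + 1) (n : ℝ) * pi (k + 1))
    (F : ℝ → ℝ)
    (om : ℝ)
    (hom : ∀ s t : ℝ, |F s - F t| ≤ om * |s - t|)
    (dK : ℝ)
    (hdK : ∀ t : ℝ,
      |(∑' k : ℕ, if δ * ((k : ℝ) - R) ≤ t then pi k else 0) - F t| ≤ dK)
    (a : ℝ) :
    (∑' k : ℕ,
        if a - δ < δ * ((k : ℝ) - R) ∧ δ * ((k : ℝ) - R) ≤ a + δ then pi k else 0)
      ≤ om * (2 * δ) + dK + 9 * δ ^ 2 + 8 * δ ^ 4 := by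
  have hδ0 : 0 < δ := hδ ▸ by positivity
  have hδ2 : 5 / R = 5 * δ ^ 2 := by rw [hδ, div_pow, one_pow, Real.sq_sqrt hR0.le]; ring
  have hsum : Summable pi := by
    by_contra h
    simp [tsum_eq_zero_of_not_summable h] at hpi_sum
  have hflowR : ∀ k : ℕ, R * pi k = min ((k : ℝ) + 1) n * pi (k + 1) := fun k => by
    rw [hR, div_mul_eq_mul_div, div_eq_iff hmu.ne', hflow]
    ring
  have hwindow : ∀ b : ℕ, pi b + pi (b + 1) + pi (b + 2) + pi (b + 3) ≤ om * (4 * δ) + 2 * dK :=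
    fun b => by
      rw [← tsum_ite_lattice_window hδ0 b]
      exact (tsum_ite_Ioc_le hsum hom hdK (by gcongr; linarith)).trans_eq (by ring)
  obtain ⟨m, hm⟩ := exists_tsum_ite_lattice_Ioc_le_add_succ (R := R) hδ0 hpi_nonneg a
  have hpair_le_one : pi m + pi (m + 1) ≤ 1 := by
    rw [← Finset.sum_pair (by omega : m ≠ m + 1), ← hpi_sum]
    exact hsum.sum_le_tsum _ fun k _ => hpi_nonneg k
  calc _ ≤ pi m + pi (m + 1) := hm
    _ ≤ (om * (4 * δ) + 2 * dK) / 2 + 5 / R :=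
      add_succ_le_half_of_window_le hflowR hpi_nonneg hR0 hRn.le hwindow hpair_le_one
    _ ≤ _ := by
      rw [hδ2]
      linarith [pow_pos hδ0 4, pow_pos hδ0 2]

/-- Anti-concentration transfer for the Erlang-C model: for any random variable
`W` with cdf `F_W`, Lipschitz modulus `ω` of `F_W`, and Kolmogorov distance
`d_K(X̃(∞), W)`, the probability that `X̃(∞)` lies in `(a − δ, a + δ]` is at
most `2δ·ω + d_K + 9δ² + 8δ⁴`. -/
theorem erlangC_point_mass_bound
    (lam mu : ℝ) (n : ℕ)
    (hlam : 0 < lam) (hmu : 0 < mu) (hn : 1 ≤ n)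
    (R δ ζ : ℝ)
    (hR : R = lam / mu) (hR0 : 0 < R) (hRn : R < (n : ℝ))
    (hδ : δ = 1 / Real.sqrt R) (hζ : ζ = δ * (R - (n : ℝ)))
    (pi : ℕ → ℝ)
    (hpi_nonneg : ∀ k, 0 ≤ pi k)
    (hpi_sum : (∑' k : ℕ, pi k) = 1)
    (hflow : ∀ k : ℕ, lam * pi k = mu * min ((k : ℝ) + 1) (n : ℝ) * pi (k + 1))
    (muW : Measure ℝ) [IsProbabilityMeasure muW]
    (F : ℝ → ℝ) (hF : ∀ t : ℝ, F t = (muW (Set.Iic t)).toReal)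
    (om : ℝ)
    (hom : ∀ s t : ℝ, |F s - F t| ≤ om * |s - t|)
    (dK : ℝ)
    (hdK : ∀ t : ℝ,
      |(∑' k : ℕ, if δ * ((k : ℝ) - R) ≤ t then pi k else 0) - F t| ≤ dK)
    (a : ℝ) :
    (∑' k : ℕ,
        if a - δ < δ * ((k : ℝ) - R) ∧ δ * ((k : ℝ) - R) ≤ a + δ then pi k else 0)
      ≤ om * (2 * δ) + dK + 9 * δ ^ 2 + 8 * δ ^ 4 :=
  erlangC_point_mass_bound_general lam mu n hmu R δ hR hR0 hRn hδ pi hpi_nonneg hpi_sum hflow F om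
    hom dK hdK a
end

section
/- Let ā : ℝ → (0,∞) be continuous and let b̄ : ℝ → ℝ be continuous, nonincreasing, and have at most one zero; let x₀ be the zero of b̄ if one exists, x₀ := −∞ if b̄ < 0 everywhere, and x₀ := +∞ if b̄ > 0 everywhere. Then: (i) for every x < x₀, e^{−∫₀ˣ 2b̄/ā}·∫_{−∞}^x (2/ā(y))·e^{∫₀ʸ 2b̄/ā} dy ≤ 1/b̄(x); (ii) for every x > x₀, e^{−∫₀ˣ 2b̄/ā}·∫_x^∞ (2/ā(y))·e^{∫₀ʸ 2b̄/ā} dy ≤ 1/|b̄(x)|; and (iii) if x₀ is finite, then for every c₁ < x₀ and every x < x₀, e^{−∫₀ˣ 2b̄/ā}·∫_{−∞}^x (2/ā(y))·e^{∫₀ʸ 2b̄/ā} dy ≤ 1/b̄(c₁) + 2|c₁ − x₀|·sup_{y∈[c₁,x₀]} 1/ā(y), and for every c₂ > x₀ and every x > x₀, e^{−∫_{x₀}^x 2b̄/ā}·∫_x^∞ (2/ā(y))·e^{∫_{x₀}^y 2b̄/ā} dy ≤ 1/|b̄(c₂)| + 2|c₂ − x₀|·sup_{y∈[x₀,c₂]}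 1/ā(y). -/
/-!
Since `p = exp ∫ 2b̄/ā` solves `p' = b̄ · (2/ā) · p`, on a half-line where `b̄ ≥ b̄ x > 0` the
integrand `(2/ā) · p` is at most `p' / b̄ x`, so its integral up to `x` is at most `p x / b̄ x`.
For the bound that is uniform up to the zero `x₀`, split the integral at `c₁`: the tail is
controlled in the same way because `p` increases up to `x₀`, and on `[c₁, x]` the integrand is
at most `sup (2/ā) · p x`. The half-lines to the right reduce to those to the left under the
reflection `y ↦ -y`, which turns `b̄` into `-b̄(-·)`.
-/

open MeasureTheory Set Filter

theorem integrableOn_Iic_of_intervalIntegral_le {g : ℝ → ℝ} {x C : ℝ} (hg : Continuous g)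
    (hg₀ : ∀ y, 0 ≤ g y) (hC : ∀ a ≤ x, ∫ y in a..x, g y ≤ C) :
    IntegrableOn g (Iic x) := by
  refine integrableOn_Iic_of_intervalIntegral_norm_bounded C x (fun _ => hg.integrableOn_Ioc)
    (tendsto_atBot_add_const_left _ x tendsto_neg_atTop_atBot)
    ((eventually_ge_atTop 0).mono fun a ha => ?_)
  simp_rw [Real.norm_of_nonneg (hg₀ _)]
  exact hC _ (by linarith)

theorem setIntegral_Iic_le_of_intervalIntegral_le {g : ℝ → ℝ} {x C : ℝ}
    (hg : IntegrableOn g (Iic x)) (hC : ∀ a ≤ x, ∫ y in a..x, g y ≤ C) :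
    ∫ y in Iic x, g y ≤ C :=
  le_of_tendsto (intervalIntegral_tendsto_integral_Iic x hg tendsto_id)
    ((eventually_le_atBot x).mono hC)

theorem setIntegral_Ici_eq_setIntegral_Iic_comp_neg {E : Type*} [NormedAddCommGroup E]
    [NormedSpace ℝ E] (f : ℝ → E) (x : ℝ) : ∫ y in Ici x, f y = ∫ y in Iic (-x), f (-y) := by
  rw [integral_comp_neg_Iic, neg_neg, integral_Ici_eq_integral_Ioi]

/-- In the theorem `w = 2 / ā`, `b = b̄` and `p = exp ∫ b w`; then `w p` is the density of the
speed measure of the diffusion. -/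
structure DriftDensity (w b p : ℝ → ℝ) : Prop where
  continuous_weight : Continuous w
  weight_nonneg : ∀ y, 0 ≤ w y
  continuous_drift : Continuous b
  antitone_drift : Antitone b
  pos : ∀ y, 0 < p y
  hasDerivAt : ∀ y, HasDerivAt p (b y * (w y * p y)) y

namespace DriftDensity

variable {w b p : ℝ → ℝ}

theorem continuous (h : DriftDensity w b p) : Continuous p :=
  continuous_iff_continuousAt.2 fun y => (h.hasDerivAt y).continuousAt

theorem continuous_weight_mul (h : DriftDensity w b p) : Continuous fun y => w y * p y :=
  h.continuous_weight.mul h.continuous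

theorem intervalIntegral_eq_sub (h : DriftDensity w b p) (a c : ℝ) :
    ∫ y in a..c, b y * (w y * p y) = p c - p a :=
  intervalIntegral.integral_eq_sub_of_hasDerivAt (fun y _ => h.hasDerivAt y)
    ((h.continuous_drift.mul h.continuous_weight_mul).intervalIntegrable a c)

theorem comp_neg (h : DriftDensity w b p) :
    DriftDensity (fun y => w (-y)) (fun y => -b (-y)) (fun y => p (-y)) where
  continuous_weight := h.continuous_weight.comp continuous_neg
  weight_nonneg y := h.weight_nonneg (-y)
  continuous_drift := (h.continuous_drift.comp continuous_neg).neg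
  antitone_drift _ _ hyz := neg_le_neg (h.antitone_drift (neg_le_neg hyz))
  pos y := h.pos (-y)
  hasDerivAt y := ((h.hasDerivAt (-y)).comp y (hasDerivAt_neg y)).congr_deriv (by ring)

theorem div_const (h : DriftDensity w b p) {k : ℝ} (hk : 0 < k) :
    DriftDensity w b fun y => p y / k where
  continuous_weight := h.continuous_weight
  weight_nonneg := h.weight_nonneg
  continuous_drift := h.continuous_drift
  antitone_drift := h.antitone_drift
  pos y := div_pos (h.pos y) hk
  hasDerivAt y := ((h.hasDerivAt y).div_const k).congr_deriv (by ring)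

theorem monotoneOn_Iic (h : DriftDensity w b p) {x₀ : ℝ} (hx₀ : 0 ≤ b x₀) :
    MonotoneOn p (Iic x₀) := by
  intro a _ c hc hac
  have : 0 ≤ ∫ y in a..c, b y * (w y * p y) :=
    intervalIntegral.integral_nonneg hac fun y hy =>
      mul_nonneg (hx₀.trans (h.antitone_drift (hy.2.trans hc)))
        (mul_nonneg (h.weight_nonneg y) (h.pos y).le)
  linarith [h.intervalIntegral_eq_sub a c]

theorem intervalIntegral_le (h : DriftDensity w b p) {a x : ℝ} (hax : a ≤ x) (hx : 0 < b x) :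
    ∫ y in a..x, w y * p y ≤ p x / b x := by
  have hpointwise : ∀ y ∈ Icc a x, w y * p y ≤ b y * (w y * p y) / b x := fun y hy => by
    rw [le_div_iff₀ hx]
    exact mul_le_mul_of_nonneg_left (h.antitone_drift hy.2)
      (mul_nonneg (h.weight_nonneg y) (h.pos y).le) |>.trans_eq (mul_comm _ _)
  calc ∫ y in a..x, w y * p y
      ≤ ∫ y in a..x, b y * (w y * p y) / b x :=
        intervalIntegral.integral_mono_on hax (h.continuous_weight_mul.intervalIntegrable a x)
          ((h.continuous_drift.mul h.continuous_weight_mul).div_const _ |>.intervalIntegrable a x)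
          hpointwise
    _ = (p x - p a) / b x := by rw [intervalIntegral.integral_div, h.intervalIntegral_eq_sub]
    _ ≤ p x / b x := by gcongr; linarith [h.pos a]

theorem integrableOn_Iic (h : DriftDensity w b p) {x : ℝ} (hx : 0 < b x) :
    IntegrableOn (fun y => w y * p y) (Iic x) :=
  integrableOn_Iic_of_intervalIntegral_le h.continuous_weight_mul
    (fun y => mul_nonneg (h.weight_nonneg y) (h.pos y).le) fun _ ha => h.intervalIntegral_le ha hx

theorem setIntegral_Iic_le (h : DriftDensity w b p) {x : ℝ} (hx : 0 < b x) :
    ∫ y in Iic x, w y * p y ≤ p x / b x :=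
  setIntegral_Iic_le_of_intervalIntegral_le (h.integrableOn_Iic hx)
    fun _ ha => h.intervalIntegral_le ha hx

theorem inv_mul_setIntegral_Iic_le (h : DriftDensity w b p) {x : ℝ} (hx : 0 < b x) :
    (p x)⁻¹ * ∫ y in Iic x, w y * p y ≤ 1 / b x := by
  rw [inv_mul_le_iff₀ (h.pos x), mul_one_div]
  exact h.setIntegral_Iic_le hx

theorem setIntegral_Iic_le_of_weight_le (h : DriftDensity w b p) {c x M : ℝ} (hcx : c ≤ x)
    (hx : 0 < b x) (hM : ∀ y ∈ Icc c x, w y ≤ M) :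
    ∫ y in Iic x, w y * p y ≤ p x / b c + (x - c) * M * p x := by
  have hc : 0 < b c := hx.trans_le (h.antitone_drift hcx)
  have hsplit :
      ∫ y in Iic x, w y * p y = (∫ y in Iic c, w y * p y) + ∫ y in c..x, w y * p y := by
    rw [← intervalIntegral.integral_Iic_sub_Iic (h.integrableOn_Iic hc) (h.integrableOn_Iic hx)]
    ring
  have htail : ∫ y in Iic c, w y * p y ≤ p x / b c :=
    (h.setIntegral_Iic_le hc).trans <| by
      gcongr
      exact h.monotoneOn_Iic hx.le hcx self_mem_Iic hcx
  have hmiddle : ∫ y in c..x, w y * p y ≤ (x - c) * M * p x := by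
    calc ∫ y in c..x, w y * p y
        ≤ ∫ _ in c..x, M * p x :=
          intervalIntegral.integral_mono_on hcx (h.continuous_weight_mul.intervalIntegrable c x)
            intervalIntegrable_const fun y hy => mul_le_mul (hM y hy)
              (h.monotoneOn_Iic hx.le hy.2 self_mem_Iic hy.2) (h.pos y).le
              ((h.weight_nonneg y).trans (hM y hy))
      _ = (x - c) * M * p x := by rw [intervalIntegral.integral_const, smul_eq_mul, mul_assoc]
  linarith

theorem inv_mul_setIntegral_Iic_le_of_weight_le (h : DriftDensity w b p) {c x x₀ M : ℝ}
    (hc : 0 < b c) (hx : 0 < b x) (hcx₀ : c ≤ x₀) (hxx₀ : x ≤ x₀) (hM : ∀ y ∈ Icc c x₀, w y ≤ M) :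
    (p x)⁻¹ * ∫ y in Iic x, w y * p y ≤ 1 / b c + |c - x₀| * M := by
  have hM₀ : 0 ≤ M := (h.weight_nonneg c).trans (hM c ⟨le_rfl, hcx₀⟩)
  rcases le_or_gt x c with hxc | hcx
  · calc (p x)⁻¹ * ∫ y in Iic x, w y * p y
        ≤ 1 / b x := h.inv_mul_setIntegral_Iic_le hx
      _ ≤ 1 / b c := one_div_le_one_div_of_le hc (h.antitone_drift hxc)
      _ ≤ 1 / b c + |c - x₀| * M := le_add_of_nonneg_right (by positivity)
  · have hpx := h.pos x
    calc (p x)⁻¹ * ∫ y in Iic x, w y * p y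
        ≤ (p x)⁻¹ * (p x / b c + (x - c) * M * p x) :=
          mul_le_mul_of_nonneg_left (h.setIntegral_Iic_le_of_weight_le hcx.le hx
            fun y hy => hM y ⟨hy.1, hy.2.trans hxx₀⟩) (inv_nonneg.2 hpx.le)
      _ = 1 / b c + (x - c) * M := by field_simp
      _ ≤ 1 / b c + |c - x₀| * M := by
        gcongr
        rw [abs_sub_comm]
        exact (sub_le_sub_right hxx₀ c).trans (le_abs_self _)

theorem integrableOn_Ici (h : DriftDensity w b p) {x : ℝ} (hx : b x < 0) :
    IntegrableOn (fun y => w y * p y) (Ici x) := by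
  simpa only [neg_neg] using (h.comp_neg.integrableOn_Iic (x := -x) (by simpa)).comp_neg_Ici

theorem inv_mul_setIntegral_Ici_le (h : DriftDensity w b p) {x : ℝ} (hx : b x < 0) :
    (p x)⁻¹ * ∫ y in Ici x, w y * p y ≤ 1 / |b x| := by
  simpa [setIntegral_Ici_eq_setIntegral_Iic_comp_neg, abs_of_neg hx]
    using h.comp_neg.inv_mul_setIntegral_Iic_le (x := -x) (by simpa)

theorem inv_mul_setIntegral_Ici_le_of_weight_le (h : DriftDensity w b p) {c x x₀ M : ℝ}
    (hc : b c < 0) (hx : b x < 0) (hcx₀ : x₀ ≤ c) (hxx₀ : x₀ ≤ x) (hM : ∀ y ∈ Icc x₀ c, w y ≤ M) :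
    (p x)⁻¹ * ∫ y in Ici x, w y * p y ≤ 1 / |b c| + |c - x₀| * M := by
  have := h.comp_neg.inv_mul_setIntegral_Iic_le_of_weight_le (c := -c) (x := -x) (x₀ := -x₀)
    (by simpa) (by simpa) (by simpa) (by simpa)
    fun y hy => hM (-y) ⟨le_neg_of_le_neg hy.2, neg_le.1 hy.1⟩
  rw [neg_neg, neg_neg, neg_sub_neg, abs_sub_comm] at this
  rwa [setIntegral_Ici_eq_setIntegral_Iic_comp_neg, abs_of_neg hc]

end DriftDensity

theorem driftDensity_of_eq_exp_intervalIntegral {a b p : ℝ → ℝ} {c : ℝ} (ha : Continuous a)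
    (ha₀ : ∀ x, 0 < a x) (hb : Continuous b) (hb_anti : Antitone b)
    (hp : ∀ x, p x = Real.exp (∫ u in c..x, 2 * b u / a u)) :
    DriftDensity (fun y => 2 / a y) b p where
  continuous_weight := continuous_const.div ha fun x => (ha₀ x).ne'
  weight_nonneg y := (div_pos two_pos (ha₀ y)).le
  continuous_drift := hb
  antitone_drift := hb_anti
  pos y := hp y ▸ Real.exp_pos _
  hasDerivAt y := by
    have hf : Continuous fun u => 2 * b u / a u :=
      (continuous_const.mul hb).div ha fun x => (ha₀ x).ne'
    have := (hf.integral_hasStrictDerivAt c y).hasDerivAt.exp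
    rw [← funext hp, ← hp y] at this
    exact this.congr_deriv (by ring)

/-- Generic integral bounds for a one-dimensional diffusion with continuous
positive diffusion coefficient `ā` and continuous, nonincreasing drift `b̄`
having at most one zero.  Writing `p x = exp(∫₀ˣ 2b̄/ā)`, the statement bounds
the integral factors appearing in the explicit solution of the Poisson equation;
the condition `x < x₀` (resp. `x > x₀`) is equivalent to `b̄ x > 0`
(resp. `b̄ x < 0`). -/
theorem drift_integral_bounds
    (abar bbar : ℝ → ℝ)
    (ha_cont : Continuous abar) (ha_pos : ∀ x, 0 < abar x)
    (hb_cont : Continuous bbar) (hb_anti : Antitone bbar)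
    (hb_zero : ∀ x y : ℝ, bbar x = 0 → bbar y = 0 → x = y)
    (p : ℝ → ℝ)
    (hp : ∀ x : ℝ, p x = Real.exp (∫ u in (0:ℝ)..x, 2 * bbar u / abar u)) :
    (∀ x : ℝ, 0 < bbar x →
      IntegrableOn (fun y => 2 / abar y * p y) (Set.Iic x) ∧
      (p x)⁻¹ * (∫ y in Set.Iic x, 2 / abar y * p y) ≤ 1 / bbar x) ∧
    (∀ x : ℝ, bbar x < 0 →
      IntegrableOn (fun y => 2 / abar y * p y) (Set.Ici x) ∧
      (p x)⁻¹ * (∫ y in Set.Ici x, 2 / abar y * p y) ≤ 1 / |bbar x|) ∧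
    (∀ x₀ : ℝ, bbar x₀ = 0 →
      (∀ c₁ : ℝ, c₁ < x₀ → ∀ x : ℝ, x < x₀ →
        IntegrableOn (fun y => 2 / abar y * p y) (Set.Iic x) ∧
        (p x)⁻¹ * (∫ y in Set.Iic x, 2 / abar y * p y)
          ≤ 1 / bbar c₁
            + 2 * |c₁ - x₀| * sSup ((fun y => 1 / abar y) '' Set.Icc c₁ x₀)) ∧
      (∀ c₂ : ℝ, x₀ < c₂ → ∀ x : ℝ, x₀ < x →
        IntegrableOn (fun y => 2 / abar y * (p y / p x₀)) (Set.Ici x) ∧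
        (p x₀ / p x) * (∫ y in Set.Ici x, 2 / abar y * (p y / p x₀))
          ≤ 1 / |bbar c₂|
            + 2 * |c₂ - x₀| * sSup ((fun y => 1 / abar y) '' Set.Icc x₀ c₂))) := by
  have hD := driftDensity_of_eq_exp_intervalIntegral ha_cont ha_pos hb_cont hb_anti hp
  have hweight (c d : ℝ) :
      ∀ y ∈ Icc c d, 2 / abar y ≤ 2 * sSup ((fun y => 1 / abar y) '' Icc c d) := fun y hy => by
    rw [div_eq_mul_one_div]
    have hbdd : BddAbove ((fun y => 1 / abar y) '' Icc c d) :=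
      (isCompact_Icc.image (continuous_const.div ha_cont fun x => (ha_pos x).ne')).bddAbove
    exact mul_le_mul_of_nonneg_left (le_csSup hbdd (mem_image_of_mem _ hy)) zero_le_two
  refine ⟨fun x hx => ⟨hD.integrableOn_Iic hx, hD.inv_mul_setIntegral_Iic_le hx⟩,
    fun x hx => ⟨hD.integrableOn_Ici hx, hD.inv_mul_setIntegral_Ici_le hx⟩, fun x₀ hx₀ => ?_⟩
  have hpos (z : ℝ) (hz : z < x₀) : 0 < bbar z :=
    (hx₀ ▸ hb_anti hz.le).lt_of_ne fun h => hz.ne (hb_zero _ _ h.symm hx₀)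
  have hneg (z : ℝ) (hz : x₀ < z) : bbar z < 0 :=
    (hx₀ ▸ hb_anti hz.le).lt_of_ne fun h => hz.ne' (hb_zero _ _ h hx₀)
  have hD₀ := hD.div_const (hD.pos x₀)
  refine ⟨fun c₁ hc₁ x hx => ⟨hD.integrableOn_Iic (hpos x hx), ?_⟩,
    fun c₂ hc₂ x hx => ⟨hD₀.integrableOn_Ici (hneg x hx), ?_⟩⟩
  · exact (hD.inv_mul_setIntegral_Iic_le_of_weight_le (hpos c₁ hc₁) (hpos x hx) hc₁.le hx.le
      (hweight c₁ x₀)).trans_eq (by ring)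
  · rw [← inv_div]
    exact (hD₀.inv_mul_setIntegral_Ici_le_of_weight_le (hneg c₂ hc₂) (hneg x hx) hc₂.le hx.le
      (hweight x₀ c₂)).trans_eq (by ring)
end
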